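/- arXiv:1705.01641 — 7 statements merged into one kernel-verified Lean document; each statement's English description precedes it below -/
import Mathlib

section
/- Let X be a finite set equipped with an action of a group G, let Y be a set, and let a : X → Y and α : Y → G be arbitrary functions. Define A : X → X by A(x) = α(a(x)) • x (where • denotes the group action). If a(A(x)) = a(x) for every x ∈ X, then A is a bijection of X. -/
/-- Every group operator of a Rauzy-type dynamics on a finite configuration space is
invertible: if `A x = α (a x) • x` and `a (A x) = a x` for all `x`, then `A` is a
bijection. -/
theorem group_operator_bijective {G X Y : Type*} [Group G] [MulAction G X] [Finite X]
    (a : X → Y) (α : Y → G) (A : X → X)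
    (hA : ∀ x, A x = α (a x) • x) (h : ∀ x, a (A x) = a x) :
    Function.Bijective A := by
  have hinj : Function.Injective A := by
    intro x y hxy
    have hrec : ∀ z, (α (a (A z)))⁻¹ • A z = z := by
      intro z
      rw [h z, hA z, inv_smul_smul]
    calc x = (α (a (A x)))⁻¹ • A x := (hrec x).symm
      _ = (α (a (A y)))⁻¹ • A y := by rw [hxy]
      _ = y := hrec y
  exact Finite.injective_iff_bijective.mp hinj
end

section
/- For every irreducible permutation σ of {1,…,n} (n ≥ 1), the rank and the cycle lengths satisfy the dimension formula r(σ) + Σ_{c ∈ λ(σ)} c = n − 1, the sum running over the multiset λ(σ) with multiplicity. -/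
open Equiv

namespace Rauzy

/-- `intervalCycle n a b` is the permutation of `Fin n` sending `j ↦ j+1` for
`a ≤ j < b`, sending `b ↦ a`, and fixing everything outside the interval `[a,b]`.
(It is the identity when `¬ (a ≤ b ∧ b < n)`.) -/
def intervalCycle (n a b : ℕ) : Equiv.Perm (Fin n) :=
  if hab : a ≤ b ∧ b < n then
    { toFun := fun j =>
        ⟨if a ≤ j.val ∧ j.val < b then j.val + 1 else if j.val = b then a else j.val,
          by have := j.isLt; split_ifs <;> omega⟩
      invFun := fun j =>
        ⟨if a < j.val ∧ j.val ≤ b then j.val - 1 else if j.val = a then b else j.val,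
          by have := j.isLt; split_ifs <;> omega⟩
      left_inv := by
        intro j
        have hj := j.isLt
        apply Fin.ext
        simp only [Fin.val_mk]
        split_ifs <;> omega
      right_inv := by
        intro j
        have hj := j.isLt
        apply Fin.ext
        simp only [Fin.val_mk]
        split_ifs <;> omega }
  else 1

/-- The Rauzy operator `L`: in 1-indexed terms, `L σ = γ ∘ σ` where `γ` fixes every
`j ≤ σ(1)`, maps `j ↦ j+1` for `σ(1) < j < n`, and maps `n ↦ σ(1)+1`.
(Everything here is 0-indexed, so `σ(1)` is `σ 0`, and `γ` is the cycle
`intervalCycle n (σ(1)+1) (n-1)` in 0-indexed terms.) -/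
def Lop {n : ℕ} (σ : Equiv.Perm (Fin n)) : Equiv.Perm (Fin n) :=
  if h : 0 < n then intervalCycle n ((σ ⟨0, h⟩).val + 1) (n - 1) * σ else σ

/-- The Rauzy operator `R`: in 1-indexed terms, `R σ = σ ∘ δ` where `δ` fixes every
`i ≥ σ⁻¹(n)`, maps `i ↦ i+1` for `1 ≤ i < σ⁻¹(n)−1`, and maps `σ⁻¹(n)−1 ↦ 1`. -/
def Rop {n : ℕ} (σ : Equiv.Perm (Fin n)) : Equiv.Perm (Fin n) :=
  if h : 0 < n then σ * intervalCycle n 0 ((σ.symm ⟨n - 1, by omega⟩).val - 1) else σ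

/-- The extended Rauzy operator `L' σ = (L (σ⁻¹))⁻¹`. -/
def Lext {n : ℕ} (σ : Equiv.Perm (Fin n)) : Equiv.Perm (Fin n) := (Lop σ⁻¹)⁻¹

/-- The extended Rauzy operator `R' σ = (R (σ⁻¹))⁻¹`. -/
def Rext {n : ℕ} (σ : Equiv.Perm (Fin n)) : Equiv.Perm (Fin n) := (Rop σ⁻¹)⁻¹

/-- `σ` and `τ` are in the same Rauzy class, i.e. `τ = w σ` for a finite word `w` in
`L, R, L⁻¹, R⁻¹`: the equivalence relation generated by the operators `L` and `R`. -/
def REquiv {n : ℕ} : Equiv.Perm (Fin n) → Equiv.Perm (Fin n) → Prop :=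
  Relation.EqvGen fun σ τ => τ = Lop σ ∨ τ = Rop σ

/-- `σ` and `τ` are in the same extended Rauzy class, i.e. related by a finite word in
`L, R, L', R'` and their inverses. -/
def ExtEquiv {n : ℕ} : Equiv.Perm (Fin n) → Equiv.Perm (Fin n) → Prop :=
  Relation.EqvGen fun σ τ => τ = Lop σ ∨ τ = Rop σ ∨ τ = Lext σ ∨ τ = Rext σ

/-- `σ` is irreducible: in 1-indexed terms, for no `1 ≤ k < n` does
`σ({1,…,k}) = {n−k+1,…,n}` hold. -/
def Irreducible {n : ℕ} (σ : Equiv.Perm (Fin n)) : Prop :=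
  ∀ k : ℕ, 0 < k → k < n →
    Finset.image σ (Finset.univ.filter fun i : Fin n => i.val < k) ≠
      Finset.univ.filter fun i : Fin n => n - k ≤ i.val

/-- The successor map of the cycle-invariant construction, acting on the set of top
arcs of the diagram of `σ` together with a marker for the rank path.

The element `x = 0` represents the two open endpoints of the rank path (top-left and
bottom-right), and an element `x ∈ {1,…,n−1}` represents the top arc joining the top
points `x` and `x+1` (1-indexed).  Starting from a top arc (or from the top-left
endpoint), the path of the diagram goes down from the top black point `x+1`
(1-indexed) along an edge, either reaching the bottom-right endpoint (if
`σ⁻¹(x+1) = n`), or continuing through a bottom arc and a second edge upward —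
possibly also crossing the `−1` mark — to the next top arc. -/
def nextArc {n : ℕ} (σ : Equiv.Perm (Fin n)) (x : Fin n) : Fin n :=
  have hn : 0 < n := Nat.lt_of_le_of_lt (Nat.zero_le _) x.isLt
  if hj : (σ.symm x).val = n - 1 then
    -- the rank path ends at the bottom-right endpoint; close the orbit back to `0`
    ⟨0, hn⟩
  else
    have hlt : (σ.symm x).val + 1 < n := by have := (σ.symm x).isLt; omega
    have hv := (σ ⟨(σ.symm x).val + 1, hlt⟩).isLt
    if hm : (σ ⟨(σ.symm x).val + 1, hlt⟩).val = n - 1 then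
      -- the upward edge reaches the top-right point: cross the `−1` mark, then
      -- follow the edge from the bottom-left point, reaching top arc `σ(1)` (1-indexed)
      ⟨(σ ⟨0, hn⟩).val + 1, by
        have h0 : σ ⟨0, hn⟩ ≠ σ ⟨(σ.symm x).val + 1, hlt⟩ := by
          intro hcontra
          have h1 := σ.injective hcontra
          simp only [Fin.mk.injEq] at h1
          omega
        have h2 : (σ ⟨0, hn⟩).val ≠ n - 1 := by
          intro hcontra
          exact h0 (Fin.ext (by rw [hcontra, hm]))
        have h3 := (σ ⟨0, hn⟩).isLt
        omega⟩
    else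
      -- reach the top arc whose left (white) endpoint is the top point `σ(j+1)` (1-indexed)
      ⟨(σ ⟨(σ.symm x).val + 1, hlt⟩).val + 1, by omega⟩

/-- The orbit of `x` under the successor map of the cycle-invariant construction. -/
def arcOrbit {n : ℕ} (σ : Equiv.Perm (Fin n)) (x : Fin n) : Finset (Fin n) :=
  (Finset.range n).image fun k => (nextArc σ)^[k] x

/-- The rank `r(σ)`: the number of top arcs lying on the open (rank) path of the
cycle-invariant construction, i.e. the size of the orbit of the marker `0` minus one. -/
def rank {n : ℕ} (σ : Equiv.Perm (Fin n)) : ℕ :=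
  if h : 0 < n then (arcOrbit σ ⟨0, h⟩).card - 1 else 0

/-- The cycle invariant `λ(σ)`: the multiset of the lengths (numbers of top arcs) of
the closed cycles of the cycle-invariant construction.  Each closed cycle is an orbit
of `nextArc σ` other than the orbit of the marker `0` (which is the rank path), counted
once via its minimal representative, and its length is the size of the orbit. -/
def cycleInv {n : ℕ} (σ : Equiv.Perm (Fin n)) : Multiset ℕ :=
  if h : 0 < n then
    Multiset.map (fun x => (arcOrbit σ x).card)
      (Finset.univ.filter fun x : Fin n =>
        x ∉ arcOrbit σ ⟨0, h⟩ ∧ ∀ y ∈ arcOrbit σ x, x ≤ y).val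
  else 0

/-- The extended cycle invariant `λ'(σ)`: the multiset `λ(σ)` together with one
additional part equal to the rank `r(σ)`. -/
def cycleInvExt {n : ℕ} (σ : Equiv.Perm (Fin n)) : Multiset ℕ := rank σ ::ₘ cycleInv σ

/-- `chi σ I` is `χ(I)`: the number of pairs `i < j` in `I` with `σ i < σ j`
(pairs of non-crossing edges of the diagram of `σ`). -/
def chi {n : ℕ} (σ : Equiv.Perm (Fin n)) (I : Finset (Fin n)) : ℕ :=
  ((I ×ˢ I).filter fun p => p.1 < p.2 ∧ σ p.1 < σ p.2).card

/-- The Arf invariant `Ā(σ) = Σ_{I ⊆ {1,…,n}} (−1)^(|I| + χ(I))`. -/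
def arfBar {n : ℕ} (σ : Equiv.Perm (Fin n)) : ℤ :=
  ∑ I ∈ (Finset.univ : Finset (Fin n)).powerset, (-1 : ℤ) ^ (I.card + chi σ I)

/-- The companion Arf sum `A(σ) = Σ_{I ⊆ {1,…,n}} (−1)^(χ(I))`. -/
def arfA {n : ℕ} (σ : Equiv.Perm (Fin n)) : ℤ :=
  ∑ I ∈ (Finset.univ : Finset (Fin n)).powerset, (-1 : ℤ) ^ (chi σ I)

/-- The sign invariant `s(σ) = sign(Ā(σ)) ∈ {−1, 0, +1}`. -/
def sgn {n : ℕ} (σ : Equiv.Perm (Fin n)) : ℤ := (arfBar σ).sign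

/-- The surgery operator `T`, mapping a permutation `τ` of `{1,…,n}` to the permutation
`T τ` of `{1,…,n+2}` defined (1-indexed) by `(T τ)(1) = τ(1)+2`, `(T τ)(2) = 1`, and,
for `1 ≤ i ≤ n`, `(T τ)(i+2) = τ(i)+1` if `τ(i) ≤ τ(1)` and `(T τ)(i+2) = τ(i)+2`
otherwise.  It is built here as `α ∘ ρ ∘ β`, where `β` rearranges the positions
(0-indexed: `0 ↦ n+1`, `1 ↦ n`, `k+2 ↦ k`), `ρ` acts as `τ` on the first `n` points
and fixes the last two, and `α` adjusts the values (0-indexed: `v ↦ v+1` for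
`v ≤ τ(0)`, `v ↦ v+2` for `τ(0) < v ≤ n−1`, `n ↦ 0`, `n+1 ↦ τ(0)+2`). -/
def Toper {n : ℕ} (τ : Equiv.Perm (Fin n)) : Equiv.Perm (Fin (n + 2)) :=
  if h : 0 < n then
    (intervalCycle (n + 2) ((τ ⟨0, h⟩).val + 2) (n + 1) * intervalCycle (n + 2) 0 n) *
      (finSumFinEquiv.permCongr (Equiv.sumCongr τ (1 : Equiv.Perm (Fin 2)))) *
      (Equiv.swap (⟨n, by omega⟩ : Fin (n + 2)) ⟨n + 1, by omega⟩ *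
        ((finRotate (n + 2))⁻¹) ^ 2)
  else 1

/-- `addOp σ l` is the permutation `add_ℓ(σ)` of `{1,…,n+1}` (with, 1-indexed,
`ℓ = l+1`), whose one-line notation is `(σ(1)+1, …, σ(ℓ−1)+1, 1, σ(ℓ)+1, …, σ(n)+1)`.
It is built as `α ∘ ρ ∘ β⁻¹` where `β` rearranges positions, `ρ` acts as `σ` on the
first `n` points, and `α` shifts all values up by one cyclically. -/
def addOp {n : ℕ} (σ : Equiv.Perm (Fin n)) (l : Fin (n + 1)) : Equiv.Perm (Fin (n + 1)) :=
  intervalCycle (n + 1) 0 n *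
    (finSumFinEquiv.permCongr (Equiv.sumCongr σ (1 : Equiv.Perm (Fin 1)))) *
    (intervalCycle (n + 1) l.val n)⁻¹

/-- The permutation `id'_n` of `{1,…,n}` (for `n ≥ 3`), with (1-indexed) values
`id'_n(1) = 1`, `id'_n(2) = n−1`, `id'_n(n) = n`, and `id'_n(i) = i−1` for
`3 ≤ i ≤ n−1`. -/
def idP (n : ℕ) : Equiv.Perm (Fin n) :=
  if h : 3 ≤ n then
    { toFun := fun i =>
        ⟨if i.val = 0 then 0 else if i.val = 1 then n - 2
          else if i.val = n - 1 then n - 1 else i.val - 1,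
          by have := i.isLt; split_ifs <;> omega⟩
      invFun := fun j =>
        ⟨if j.val = 0 then 0 else if j.val = n - 2 then 1
          else if j.val = n - 1 then n - 1 else j.val + 1,
          by have := j.isLt; split_ifs <;> omega⟩
      left_inv := by
        intro i
        have hi := i.isLt
        apply Fin.ext
        simp only [Fin.val_mk]
        split_ifs <;> (try contradiction) <;> omega
      right_inv := by
        intro j
        have hj := j.isLt
        apply Fin.ext
        simp only [Fin.val_mk]
        split_ifs <;> (try contradiction) <;> omega }
  else 1

/-- The set of descents of `σ`: positions `i` (1-indexed, `i < n`) such that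
`σ(i+1) = σ(i) − 1`. -/
def descentSet {n : ℕ} (σ : Equiv.Perm (Fin n)) : Finset (Fin n) :=
  Finset.univ.filter fun i =>
    ∃ j : Fin n, j.val = i.val + 1 ∧ (σ j).val + 1 = (σ i).val

/-- The set of special descents of `σ`: positions `i` (1-indexed, `i < n`) such that
`σ(i+1) = n` and `σ(1) = σ(i) − 1`. -/
def specialDescentSet {n : ℕ} (σ : Equiv.Perm (Fin n)) : Finset (Fin n) :=
  Finset.univ.filter fun i =>
    ∃ j z : Fin n, z.val = 0 ∧ j.val = i.val + 1 ∧ (σ j).val = n - 1 ∧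
      (σ z).val + 1 = (σ i).val

/-- The positions of the edges kept when forming the primitive of `σ`:
those which are neither descents nor special descents. -/
def keepSet {n : ℕ} (σ : Equiv.Perm (Fin n)) : Finset (Fin n) :=
  Finset.univ.filter fun i => i ∉ descentSet σ ∧ i ∉ specialDescentSet σ

/-- The size of the primitive of `σ`. -/
def primSize {n : ℕ} (σ : Equiv.Perm (Fin n)) : ℕ := (keepSet σ).card

/-- The primitive `prim(σ)` of `σ`: the permutation induced by the edges `(i, σ(i))`
of `σ` which are neither descents nor special descents, after order-preserving
relabelling of the remaining positions and of the remaining values. -/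
def primPerm {n : ℕ} (σ : Equiv.Perm (Fin n)) : Equiv.Perm (Fin (primSize σ)) :=
  ((keepSet σ).orderIsoOfFin rfl).toEquiv.trans
    ((Equiv.subtypeEquiv (p := fun x => x ∈ keepSet σ)
        (q := fun y => y ∈ Finset.image σ (keepSet σ)) σ
        (fun _ => (Function.Injective.mem_finset_image σ.injective).symm)).trans
      ((Finset.image σ (keepSet σ)).orderIsoOfFin
        (by rw [Finset.card_image_of_injective _ σ.injective]; rfl)).toEquiv.symm)


section OrbitCount
variable {n : ℕ} {f : Fin n → Fin n}

lemma exists_period (hf : Function.Injective f) (x : Fin n) :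
    ∃ p, 0 < p ∧ p ≤ n ∧ f^[p] x = x := by
  have hcard : ¬ Function.Injective (fun k : Fin (n+1) => f^[k.val] x) := by
    intro hinj
    have := Fintype.card_le_of_injective _ hinj
    simp at this
  rw [Function.not_injective_iff] at hcard
  obtain ⟨a, b, hab, hne⟩ := hcard
  wlog hlt : a.val < b.val generalizing a b
  · exact this b a hab.symm hne.symm (by
      have := Fin.val_ne_of_ne hne; omega)
  refine ⟨b.val - a.val, by omega, by have := b.isLt; omega, ?_⟩
  have h1 : f^[a.val] (f^[b.val - a.val] x) = f^[a.val] x := by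
    rw [← Function.iterate_add_apply]
    rw [show a.val + (b.val - a.val) = b.val by omega]
    exact hab.symm
  exact (hf.iterate a.val) h1

def orb (f : Fin n → Fin n) (x : Fin n) : Finset (Fin n) :=
  (Finset.range n).image fun k => f^[k] x

lemma mem_orb {x y : Fin n} : y ∈ orb f x ↔ ∃ k < n, f^[k] x = y := by
  simp [orb]

lemma iterate_mem_orb (hf : Function.Injective f) (x : Fin n) (k : ℕ) :
    f^[k] x ∈ orb f x := by
  obtain ⟨p, hp0, hpn, hp⟩ := exists_period hf x
  have hper : ∀ m, f^[m * p] x = x := by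
    intro m
    induction m with
    | zero => simp
    | succ m ih => rw [Nat.succ_mul, Function.iterate_add_apply, hp, ih]
  have : f^[k] x = f^[k % p] x := by
    conv_lhs => rw [← Nat.mod_add_div' k p]
    rw [Function.iterate_add_apply, hper]
  rw [this, mem_orb]
  exact ⟨k % p, lt_of_lt_of_le (Nat.mod_lt k hp0) hpn, rfl⟩

lemma mem_orb_self (hn : 0 < n) (x : Fin n) : x ∈ orb f x :=
  mem_orb.2 ⟨0, hn, rfl⟩

lemma orb_symm (hf : Function.Injective f) {x y : Fin n} (h : y ∈ orb f x) :
    x ∈ orb f y := by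
  obtain ⟨k, hk, rfl⟩ := mem_orb.1 h
  obtain ⟨p, hp0, hpn, hp⟩ := exists_period hf x
  have hper : ∀ m, f^[m * p] x = x := by
    intro m
    induction m with
    | zero => simp
    | succ m ih => rw [Nat.succ_mul, Function.iterate_add_apply, hp, ih]
  have hdm := Nat.div_add_mod k p
  rw [mul_comm] at hdm
  rcases Nat.eq_zero_or_pos (k % p) with h0 | h0
  · have hkx : f^[k] x = x := by
      conv_lhs => rw [show k = (k / p) * p by omega]
      exact hper _
    rw [hkx]; exact mem_orb_self (by omega) x
  · refine mem_orb.2 ⟨p - k % p, by have := Nat.mod_lt k hp0; omega, ?_⟩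
    rw [← Function.iterate_add_apply,
      show p - k % p + k = (k / p + 1) * p by
        rw [Nat.add_mul, one_mul]
        have := Nat.mod_lt k hp0; omega]
    exact hper _

lemma orb_eq_of_mem (hf : Function.Injective f) {x y : Fin n} (h : y ∈ orb f x) :
    orb f y = orb f x := by
  ext z
  constructor
  · intro hz
    obtain ⟨k, hk, rfl⟩ := mem_orb.1 h
    obtain ⟨j, hj, rfl⟩ := mem_orb.1 hz
    rw [← Function.iterate_add_apply]
    exact iterate_mem_orb hf x _
  · intro hz
    have hx : x ∈ orb f y := orb_symm hf h
    obtain ⟨k, hk, rfl⟩ := mem_orb.1 hx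
    obtain ⟨j, hj, rfl⟩ := mem_orb.1 hz
    rw [← Function.iterate_add_apply]
    exact iterate_mem_orb hf y _
lemma orbit_count (hn : 0 < n) (hf : Function.Injective f) :
    ((orb f ⟨0, hn⟩).card - 1) +
      (Multiset.map (fun x => (orb f x).card)
        (Finset.univ.filter fun x : Fin n =>
          x ∉ orb f ⟨0, hn⟩ ∧ ∀ y ∈ orb f x, x ≤ y).val).sum = n - 1 := by
  set O0 := orb f ⟨0, hn⟩ with hO0
  set t := Finset.univ.filter fun x : Fin n =>
      x ∉ O0 ∧ ∀ y ∈ orb f x, x ≤ y with ht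
  have hne : ∀ x : Fin n, (orb f x).Nonempty := fun x => ⟨x, mem_orb_self hn x⟩
  set m : Fin n → Fin n := fun y => (orb f y).min' (hne y) with hm
  have hmmem : ∀ y, m y ∈ orb f y := fun y => (orb f y).min'_mem (hne y)
  have horb_m : ∀ y, orb f (m y) = orb f y := fun y => orb_eq_of_mem hf (hmmem y)
  have hsum : (Multiset.map (fun x => (orb f x).card) t.val).sum
      = ∑ x ∈ t, (orb f x).card := rfl
  rw [hsum]
  have key : (Finset.univ.filter fun y : Fin n => y ∉ O0).card
      = ∑ x ∈ t, (orb f x).card := by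
    have hmaps : ∀ y ∈ (Finset.univ.filter fun y : Fin n => y ∉ O0), m y ∈ t := by
      intro y hy
      rw [Finset.mem_filter] at hy ⊢
      refine ⟨Finset.mem_univ _, ?_, ?_⟩
      · intro hmem
        have heq : orb f y = O0 := by
          rw [← horb_m y]; exact orb_eq_of_mem hf hmem
        exact hy.2 (heq ▸ mem_orb_self hn y)
      · intro z hz
        rw [horb_m] at hz
        exact (orb f y).min'_le z hz
    have := Finset.card_eq_sum_card_fiberwise hmaps
    rw [this]
    apply Finset.sum_congr rfl
    intro b hb
    rw [Finset.mem_filter] at hb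
    congr 1
    ext y
    simp only [Finset.mem_filter, Finset.mem_univ, true_and]
    constructor
    · rintro ⟨hy1, hy2⟩
      rw [← hy2, horb_m]
      exact mem_orb_self hn y
    · intro hy
      have horb : orb f y = orb f b := orb_eq_of_mem hf hy
      constructor
      · intro hyO
        have heq : orb f b = O0 := by
          rw [← horb]; exact orb_eq_of_mem hf hyO
        exact hb.2.1 (heq ▸ mem_orb_self hn b)
      · have h1 : m y = (orb f b).min' ((horb ▸ hne y)) := by
          simp only [hm, horb]
        rw [h1]
        apply le_antisymm
        · exact Finset.min'_le _ _ (mem_orb_self hn b)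
        · exact hb.2.2 _ ((orb f b).min'_mem _)
  have hcard : (Finset.univ.filter fun y : Fin n => y ∉ O0).card = n - O0.card := by
    rw [Finset.filter_not, Finset.filter_mem_eq_inter, Finset.univ_inter,
      Finset.card_sdiff_of_subset (Finset.subset_univ _), Finset.card_univ, Fintype.card_fin]
  have h1 : 1 ≤ O0.card := Finset.card_pos.2 (hne _)
  have h2 : O0.card ≤ n := by
    have := Finset.card_le_card (Finset.subset_univ O0)
    simpa using this
  omega
end OrbitCount

lemma nextArc_spec {n : ℕ} (σ : Equiv.Perm (Fin n)) (x : Fin n) :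
    ((σ.symm x).val = n - 1 ∧ (nextArc σ x).val = 0) ∨
    ((σ.symm x).val ≠ n - 1 ∧ ∃ hlt : (σ.symm x).val + 1 < n,
      ((σ ⟨(σ.symm x).val + 1, hlt⟩).val = n - 1 ∧
        (nextArc σ x).val = (σ ⟨0, x.pos⟩).val + 1) ∨
      ((σ ⟨(σ.symm x).val + 1, hlt⟩).val ≠ n - 1 ∧
        (nextArc σ x).val = (σ ⟨(σ.symm x).val + 1, hlt⟩).val + 1)) := by
  by_cases h1 : (σ.symm x).val = n - 1
  · refine Or.inl ⟨h1, ?_⟩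
    unfold nextArc; split_ifs; rfl
  · have hlt : (σ.symm x).val + 1 < n := by have := (σ.symm x).isLt; omega
    refine Or.inr ⟨h1, hlt, ?_⟩
    by_cases h2 : (σ ⟨(σ.symm x).val + 1, hlt⟩).val = n - 1
    · refine Or.inl ⟨h2, ?_⟩
      unfold nextArc; split_ifs; rfl
    · refine Or.inr ⟨h2, ?_⟩
      unfold nextArc; split_ifs; rfl

lemma nextArc_injective {n : ℕ} (σ : Equiv.Perm (Fin n)) :
    Function.Injective (nextArc σ) := by
  intro x y h
  have hv : (nextArc σ x).val = (nextArc σ y).val := congrArg Fin.val h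
  have hx0 := (σ ⟨0, x.pos⟩).isLt
  rcases nextArc_spec σ x with ⟨ha, hb⟩ | ⟨ha, hlt, ⟨hc, hd⟩ | ⟨hc, hd⟩⟩ <;>
    rcases nextArc_spec σ y with ⟨ha', hb'⟩ | ⟨ha', hlt', ⟨hc', hd'⟩ | ⟨hc', hd'⟩⟩
  · exact σ.symm.injective (Fin.ext (by omega))
  · omega
  · omega
  · omega
  · -- both cross the mark
    have : σ ⟨(σ.symm x).val + 1, hlt⟩ = σ ⟨(σ.symm y).val + 1, hlt'⟩ :=
      Fin.ext (by omega)
    have := σ.injective this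
    simp only [Fin.mk.injEq] at this
    exact σ.symm.injective (Fin.ext (by omega))
  · -- x crosses mark, y doesn't
    have h0 : σ ⟨0, x.pos⟩ = σ ⟨(σ.symm y).val + 1, hlt'⟩ := Fin.ext (by omega)
    have := σ.injective h0
    simp only [Fin.mk.injEq] at this
    omega
  · omega
  · have h0 : σ ⟨0, y.pos⟩ = σ ⟨(σ.symm x).val + 1, hlt⟩ := Fin.ext (by omega)
    have := σ.injective h0
    simp only [Fin.mk.injEq] at this
    omega
  · have : σ ⟨(σ.symm x).val + 1, hlt⟩ = σ ⟨(σ.symm y).val + 1, hlt'⟩ :=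
      Fin.ext (by omega)
    have := σ.injective this
    simp only [Fin.mk.injEq] at this
    exact σ.symm.injective (Fin.ext (by omega))


/-- The dimension formula: for an irreducible permutation `σ` of `{1,…,n}`,
`r(σ) + Σ_{c ∈ λ(σ)} c = n − 1`. -/
theorem dimension_formula (n : ℕ) (hn : 1 ≤ n) (σ : Equiv.Perm (Fin n))
    (hσ : Irreducible σ) :
    rank σ + (cycleInv σ).sum = n - 1 := by
  have hpos : 0 < n := hn
  rw [rank, dif_pos hpos, cycleInv, dif_pos hpos]
  exact orbit_count hpos (nextArc_injective σ)

end Rauzy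
end

section
/- Let σ be an irreducible permutation of {1,…,n}. Then Lσ and Rσ are irreducible, and the cycle invariant is preserved: λ(Lσ) = λ(σ), r(Lσ) = r(σ), λ(Rσ) = λ(σ) and r(Rσ) = r(σ). Consequently the pair (λ, r) is constant on every Rauzy class of irreducible permutations. -/
open Equiv

namespace Rauzy

-- basic val lemmas
lemma intervalCycle_val {n : ℕ} (a b : ℕ) (hab : a ≤ b) (hbn : b < n) (j : Fin n) :
    (intervalCycle n a b j).val =
      if a ≤ j.val ∧ j.val < b then j.val + 1 else if j.val = b then a else j.val := by
  simp only [intervalCycle, dif_pos (⟨hab, hbn⟩ : a ≤ b ∧ b < n), Equiv.coe_fn_mk]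

lemma intervalCycle_symm_val {n : ℕ} (a b : ℕ) (hab : a ≤ b) (hbn : b < n) (j : Fin n) :
    ((intervalCycle n a b).symm j).val =
      if a < j.val ∧ j.val ≤ b then j.val - 1 else if j.val = a then b else j.val := by
  simp only [intervalCycle, dif_pos (⟨hab, hbn⟩ : a ≤ b ∧ b < n), Equiv.coe_fn_symm_mk]

lemma intervalCycle_id {n : ℕ} (a b : ℕ) (h : ¬ (a ≤ b ∧ b < n)) :
    intervalCycle n a b = 1 := by
  simp only [intervalCycle, dif_neg h]

lemma nextArc_val_last {n : ℕ} (σ : Equiv.Perm (Fin n)) (x : Fin n)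
    (h : (σ.symm x).val = n - 1) : (nextArc σ x).val = 0 := by
  unfold nextArc
  split_ifs <;> first | rfl | tauto

lemma nextArc_val_mark {n : ℕ} (σ : Equiv.Perm (Fin n)) (x : Fin n)
    (h1 : (σ.symm x).val ≠ n - 1) (hlt : (σ.symm x).val + 1 < n) (hn : 0 < n)
    (h2 : (σ ⟨(σ.symm x).val + 1, hlt⟩).val = n - 1) :
    (nextArc σ x).val = (σ ⟨0, hn⟩).val + 1 := by
  unfold nextArc
  split_ifs <;> first | rfl | tauto

lemma nextArc_val_mid {n : ℕ} (σ : Equiv.Perm (Fin n)) (x : Fin n)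
    (h1 : (σ.symm x).val ≠ n - 1) (hlt : (σ.symm x).val + 1 < n)
    (h2 : ¬ (σ ⟨(σ.symm x).val + 1, hlt⟩).val = n - 1) :
    (nextArc σ x).val = (σ ⟨(σ.symm x).val + 1, hlt⟩).val + 1 := by
  unfold nextArc
  split_ifs <;> first | rfl | tauto
lemma mem_arcOrbit_self {n : ℕ} (σ : Equiv.Perm (Fin n)) (x : Fin n) :
    x ∈ arcOrbit σ x := by
  have hn : 0 < n := x.pos
  exact Finset.mem_image.mpr ⟨0, Finset.mem_range.mpr hn, rfl⟩

lemma iterate_mem_arcOrbit {n : ℕ} (σ : Equiv.Perm (Fin n)) (x : Fin n) (m : ℕ) :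
    (nextArc σ)^[m] x ∈ arcOrbit σ x := by
  have hn : 0 < n := x.pos
  induction m using Nat.strong_induction_on with
  | _ m ih =>
    by_cases hm : m < n
    · exact Finset.mem_image.mpr ⟨m, Finset.mem_range.mpr hm, rfl⟩
    · push_neg at hm
      obtain ⟨i, j, hne, hij⟩ := Fintype.exists_ne_map_eq_of_card_lt
        (fun k : Fin (n + 1) => (nextArc σ)^[k.val] x) (by simp)
      rcases Ne.lt_or_gt hne with hlt | hlt
      · have hrw : (nextArc σ)^[m] x = (nextArc σ)^[m - j.val + i.val] x := by
          have h1 : m = (m - j.val) + j.val := by have := j.isLt; omega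
          calc (nextArc σ)^[m] x = (nextArc σ)^[(m - j.val) + j.val] x := by rw [← h1]
            _ = (nextArc σ)^[m - j.val] ((nextArc σ)^[j.val] x) := by
                rw [Function.iterate_add_apply]
            _ = (nextArc σ)^[m - j.val] ((nextArc σ)^[i.val] x) := by rw [← hij]
            _ = (nextArc σ)^[m - j.val + i.val] x := by rw [Function.iterate_add_apply]
        rw [hrw]
        exact ih _ (by have := j.isLt; have hi := i.isLt; omega)
      · have hrw : (nextArc σ)^[m] x = (nextArc σ)^[m - i.val + j.val] x := by
          have h1 : m = (m - i.val) + i.val := by have := i.isLt; omega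
          calc (nextArc σ)^[m] x = (nextArc σ)^[(m - i.val) + i.val] x := by rw [← h1]
            _ = (nextArc σ)^[m - i.val] ((nextArc σ)^[i.val] x) := by
                rw [Function.iterate_add_apply]
            _ = (nextArc σ)^[m - i.val] ((nextArc σ)^[j.val] x) := by rw [hij]
            _ = (nextArc σ)^[m - i.val + j.val] x := by rw [Function.iterate_add_apply]
        rw [hrw]
        exact ih _ (by have := j.isLt; have hi := i.isLt; omega)

lemma mem_arcOrbit_iff {n : ℕ} (σ : Equiv.Perm (Fin n)) (x y : Fin n) :
    y ∈ arcOrbit σ x ↔ ∃ m, (nextArc σ)^[m] x = y := by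
  constructor
  · intro h
    obtain ⟨k, _, hk⟩ := Finset.mem_image.mp h
    exact ⟨k, hk⟩
  · rintro ⟨m, rfl⟩
    exact iterate_mem_arcOrbit σ x m

lemma exists_pos_period {n : ℕ} (σ : Equiv.Perm (Fin n)) (x : Fin n) :
    ∃ c, 0 < c ∧ (nextArc σ)^[c] x = x := by
  obtain ⟨i, j, hne, hij⟩ := Fintype.exists_ne_map_eq_of_card_lt
    (fun k : Fin (n + 1) => (nextArc σ)^[k.val] x) (by simp [x.pos])
  have key : ∀ p q : ℕ, p < q → (nextArc σ)^[p] x = (nextArc σ)^[q] x →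
      (nextArc σ)^[q - p] x = x := by
    intro p q hpq h
    have h2 : (nextArc σ)^[p] ((nextArc σ)^[q - p] x) = (nextArc σ)^[p] x := by
      rw [← Function.iterate_add_apply]
      rw [(by omega : p + (q - p) = q)]
      exact h.symm
    exact (Function.Injective.iterate (nextArc_injective σ) p) h2
  rcases Ne.lt_or_gt hne with hlt | hlt
  · exact ⟨j.val - i.val, by omega, key i.val j.val hlt hij⟩
  · exact ⟨i.val - j.val, by omega, key j.val i.val hlt hij.symm⟩

lemma mem_arcOrbit_symm {n : ℕ} (σ : Equiv.Perm (Fin n)) {x y : Fin n}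
    (h : y ∈ arcOrbit σ x) : x ∈ arcOrbit σ y := by
  obtain ⟨k, hk⟩ := (mem_arcOrbit_iff σ x y).mp h
  obtain ⟨c, hc, hcx⟩ := exists_pos_period σ x
  rcases Nat.eq_zero_or_pos k with rfl | hkpos
  · simp at hk; rw [← hk]; exact mem_arcOrbit_self σ x
  · have hmul : ∀ t, (nextArc σ)^[c * t] x = x := by
      intro t
      induction t with
      | zero => simp
      | succ t iht =>
        rw [Nat.mul_succ, Function.iterate_add_apply, hcx, iht]
    have hx : (nextArc σ)^[c * k - k] y = x := by
      rw [← hk, ← Function.iterate_add_apply]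
      rw [(by have : k ≤ c * k := Nat.le_mul_of_pos_left k hc; omega :
        c * k - k + k = c * k)]
      exact hmul k
    rw [← hx]
    exact iterate_mem_arcOrbit σ y _

lemma arcOrbit_eq_of_mem {n : ℕ} (σ : Equiv.Perm (Fin n)) {x y : Fin n}
    (h : y ∈ arcOrbit σ x) : arcOrbit σ y = arcOrbit σ x := by
  have sub : ∀ {u v : Fin n}, v ∈ arcOrbit σ u → arcOrbit σ v ⊆ arcOrbit σ u := by
    intro u v huv z hz
    obtain ⟨k, hk⟩ := (mem_arcOrbit_iff σ u v).mp huv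
    obtain ⟨m, hm⟩ := (mem_arcOrbit_iff σ v z).mp hz
    exact (mem_arcOrbit_iff σ u z).mpr ⟨m + k, by
      rw [Function.iterate_add_apply, hk, hm]⟩
  exact Finset.Subset.antisymm (sub h) (sub (mem_arcOrbit_symm σ h))
lemma arcOrbit_conj {n : ℕ} (σ τ : Equiv.Perm (Fin n)) (γ : Equiv.Perm (Fin n))
    (h : ∀ x, nextArc τ (γ x) = γ (nextArc σ x)) (x : Fin n) :
    arcOrbit τ (γ x) = (arcOrbit σ x).image γ := by
  have hiter : ∀ k y, (nextArc τ)^[k] (γ y) = γ ((nextArc σ)^[k] y) := by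
    intro k
    induction k with
    | zero => intro y; rfl
    | succ k ih =>
      intro y
      rw [Function.iterate_succ_apply, Function.iterate_succ_apply, h y, ih (nextArc σ y)]
  unfold arcOrbit
  rw [Finset.image_image]
  exact Finset.image_congr (fun k _ => hiter k x)

lemma invariants_of_conj {n : ℕ} (σ τ : Equiv.Perm (Fin n)) (γ : Equiv.Perm (Fin n))
    (h : ∀ x, nextArc τ (γ x) = γ (nextArc σ x))
    (h0 : ∀ hn : 0 < n, γ ⟨0, hn⟩ = ⟨0, hn⟩) :
    cycleInv τ = cycleInv σ ∧ rank τ = rank σ := by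
  rcases Nat.eq_zero_or_pos n with rfl | hn
  · constructor <;> simp [cycleInv, rank]
  have horb : ∀ x, arcOrbit τ (γ x) = (arcOrbit σ x).image γ := arcOrbit_conj σ τ γ h
  have hcard : ∀ x, (arcOrbit τ (γ x)).card = (arcOrbit σ x).card := by
    intro x; rw [horb, Finset.card_image_of_injective _ γ.injective]
  have horb0 : arcOrbit τ ⟨0, hn⟩ = (arcOrbit σ ⟨0, hn⟩).image γ := by
    have := horb ⟨0, hn⟩
    rwa [h0 hn] at this
  have hrank : rank τ = rank σ := by
    unfold rank
    rw [dif_pos hn, dif_pos hn, horb0, Finset.card_image_of_injective _ γ.injective]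
  refine ⟨?_, hrank⟩
  -- cycleInv
  unfold cycleInv
  rw [dif_pos hn, dif_pos hn]
  set Sτ := Finset.univ.filter fun x : Fin n =>
    x ∉ arcOrbit τ ⟨0, hn⟩ ∧ ∀ y ∈ arcOrbit τ x, x ≤ y with hSτ
  set Sσ := Finset.univ.filter fun x : Fin n =>
    x ∉ arcOrbit σ ⟨0, hn⟩ ∧ ∀ y ∈ arcOrbit σ x, x ≤ y with hSσ
  have hne : ∀ x : Fin n, (arcOrbit τ (γ x)).Nonempty :=
    fun x => ⟨γ x, mem_arcOrbit_self τ (γ x)⟩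
  set φ : Fin n → Fin n := fun x => (arcOrbit τ (γ x)).min' (hne x) with hφ
  have hφmem : ∀ x, φ x ∈ arcOrbit τ (γ x) := fun x => Finset.min'_mem _ _
  have hkey : ∀ x, arcOrbit τ (φ x) = arcOrbit τ (γ x) :=
    fun x => arcOrbit_eq_of_mem τ (hφmem x)
  -- S_τ = S_σ.image φ
  have hset : Sτ = Sσ.image φ := by
    ext y
    simp only [hSτ, hSσ, Finset.mem_filter, Finset.mem_univ, true_and, Finset.mem_image]
    constructor
    · rintro ⟨hy1, hy2⟩
      have hneσ : (arcOrbit σ (γ.symm y)).Nonempty := ⟨_, mem_arcOrbit_self σ _⟩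
      refine ⟨(arcOrbit σ (γ.symm y)).min' hneσ, ⟨?_, ?_⟩, ?_⟩
      · -- min' ∉ arcOrbit σ 0
        intro hmem
        set x := (arcOrbit σ (γ.symm y)).min' hneσ with hx
        have h1 : arcOrbit σ x = arcOrbit σ (γ.symm y) :=
          arcOrbit_eq_of_mem σ (Finset.min'_mem _ _)
        have h2 : arcOrbit σ x = arcOrbit σ ⟨0, hn⟩ := arcOrbit_eq_of_mem σ hmem
        have h3 : γ.symm y ∈ arcOrbit σ ⟨0, hn⟩ := by
          rw [← h2, h1]; exact mem_arcOrbit_self σ _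
        exact hy1 (by
          rw [horb0]
          exact Finset.mem_image.mpr ⟨γ.symm y, h3, γ.apply_symm_apply y⟩)
      · -- min property
        intro z hz
        set x := (arcOrbit σ (γ.symm y)).min' hneσ with hx
        have h1 : arcOrbit σ x = arcOrbit σ (γ.symm y) :=
          arcOrbit_eq_of_mem σ (Finset.min'_mem _ _)
        rw [h1] at hz
        exact Finset.min'_le _ _ hz
      · -- φ x = y
        set x := (arcOrbit σ (γ.symm y)).min' hneσ with hx
        have h1 : arcOrbit σ x = arcOrbit σ (γ.symm y) :=
          arcOrbit_eq_of_mem σ (Finset.min'_mem _ _)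
        have h2 : arcOrbit τ (γ x) = arcOrbit τ y := by
          rw [horb, h1, ← horb, γ.apply_symm_apply]
        have hmin : (arcOrbit τ y).min' ⟨y, mem_arcOrbit_self τ y⟩ = y := by
          apply le_antisymm
          · exact Finset.min'_le _ _ (mem_arcOrbit_self τ y)
          · exact hy2 _ (Finset.min'_mem _ _)
        rw [hφ]
        simp only
        rw [← hmin]
        congr 1
    · rintro ⟨x, ⟨hx1, hx2⟩, rfl⟩
      constructor
      · -- φ x ∉ arcOrbit τ 0
        intro hmem
        rw [horb0] at hmem
        obtain ⟨z, hz, hzeq⟩ := Finset.mem_image.mp hmem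
        have h1 := hφmem x
        rw [horb x] at h1
        obtain ⟨w, hw, hweq⟩ := Finset.mem_image.mp h1
        have hzw : z = w := γ.injective (by rw [hzeq, hweq])
        subst hzw
        have h2 : arcOrbit σ z = arcOrbit σ x := arcOrbit_eq_of_mem σ hw
        have h3 : arcOrbit σ z = arcOrbit σ ⟨0, hn⟩ := arcOrbit_eq_of_mem σ hz
        exact hx1 (by rw [← h3, h2]; exact mem_arcOrbit_self σ x)
      · -- min property
        intro z hz
        rw [hkey x] at hz
        exact Finset.min'_le _ _ hz
  rw [hset]
  have hinj : Set.InjOn φ Sσ := by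
    intro x hx x' hx' hxx
    simp only [hSσ, Finset.coe_filter, Finset.mem_univ, true_and, Set.mem_setOf_eq] at hx hx'
    have h1 : arcOrbit τ (γ x) = arcOrbit τ (γ x') := by
      rw [← hkey x, ← hkey x', hxx]
    have h2 : arcOrbit σ x = arcOrbit σ x' := by
      have := h1
      rw [horb, horb] at this
      ext z
      constructor
      · intro hz
        have : γ z ∈ (arcOrbit σ x').image γ := by
          rw [← this]; exact Finset.mem_image_of_mem γ hz
        obtain ⟨w, hw, hweq⟩ := Finset.mem_image.mp this
        rwa [← γ.injective hweq]
      · intro hz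
        have : γ z ∈ (arcOrbit σ x).image γ := by
          rw [this]; exact Finset.mem_image_of_mem γ hz
        obtain ⟨w, hw, hweq⟩ := Finset.mem_image.mp this
        rwa [← γ.injective hweq]
    apply le_antisymm
    · exact hx.2 x' (by rw [h2]; exact mem_arcOrbit_self σ x')
    · exact hx'.2 x (by rw [← h2]; exact mem_arcOrbit_self σ x)
  rw [Finset.image_val_of_injOn hinj, Multiset.map_map]
  apply Multiset.map_congr rfl
  intro x _
  simp only [Function.comp_apply]
  rw [hkey x, hcard x]
lemma nextArc_val_last' {n : ℕ} (σ : Equiv.Perm (Fin n)) (x : Fin n) (j : ℕ)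
    (hj : (σ.symm x).val = j) (h : j = n - 1) : (nextArc σ x).val = 0 := by
  subst hj; exact nextArc_val_last σ x h

lemma nextArc_val_mark' {n : ℕ} (σ : Equiv.Perm (Fin n)) (x : Fin n) (j : ℕ)
    (hj : (σ.symm x).val = j) (h1 : j ≠ n - 1) (hlt : j + 1 < n) (hn : 0 < n)
    (h2 : (σ ⟨j + 1, hlt⟩).val = n - 1) :
    (nextArc σ x).val = (σ ⟨0, hn⟩).val + 1 := by
  subst hj; exact nextArc_val_mark σ x h1 hlt hn h2

lemma nextArc_val_mid' {n : ℕ} (σ : Equiv.Perm (Fin n)) (x : Fin n) (j : ℕ)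
    (hj : (σ.symm x).val = j) (h1 : j ≠ n - 1) (hlt : j + 1 < n)
    (h2 : ¬ (σ ⟨j + 1, hlt⟩).val = n - 1) :
    (nextArc σ x).val = (σ ⟨j + 1, hlt⟩).val + 1 := by
  subst hj; exact nextArc_val_mid σ x h1 hlt h2

lemma nextArc_Rop {n : ℕ} (σ : Equiv.Perm (Fin n)) (x : Fin n) :
    nextArc (Rop σ) x = nextArc σ x := by
  have hn : 0 < n := x.pos
  have hn1 : n - 1 < n := by omega
  set I := (σ.symm ⟨n - 1, hn1⟩).val with hIdef
  have hIlt : I < n := (σ.symm ⟨n - 1, hn1⟩).isLt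
  set b := I - 1 with hbdef
  have hbn : b < n := by omega
  set δ := intervalCycle n 0 b with hδdef
  have hRop : Rop σ = σ * δ := by rw [Rop, dif_pos hn]
  have happ : ∀ y : Fin n, (Rop σ) y = σ (δ y) := by
    intro y; rw [hRop]; rfl
  have hsymm : ∀ y : Fin n, (Rop σ).symm y = δ.symm (σ.symm y) := by
    intro y; rw [hRop, Equiv.Perm.mul_def, Equiv.symm_trans_apply]
  have hδval : ∀ (m : ℕ) (hm : m < n),
      (δ ⟨m, hm⟩).val = if m < b then m + 1 else if m = b then 0 else m := by
    intro m hm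
    rw [hδdef, intervalCycle_val 0 b (Nat.zero_le b) hbn]
    simp only [Nat.zero_le, true_and]
  have hδs : ∀ (m : ℕ) (hm : m < n),
      ((δ.symm) ⟨m, hm⟩).val = if 0 < m ∧ m ≤ b then m - 1
        else if m = 0 then b else m := by
    intro m hm
    rw [hδdef, intervalCycle_symm_val 0 b (Nat.zero_le b) hbn]
  set j := (σ.symm x).val with hjdef
  have hjlt : j < n := (σ.symm x).isLt
  have hσI : (σ ⟨I, hIlt⟩).val = n - 1 := by
    have h1 : (⟨I, hIlt⟩ : Fin n) = σ.symm ⟨n - 1, hn1⟩ := Fin.ext rfl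
    rw [h1, Equiv.apply_symm_apply]
  have huniq : ∀ (m : ℕ) (hm : m < n), (σ ⟨m, hm⟩).val = n - 1 → m = I := by
    intro m hm h
    have h1 : σ ⟨m, hm⟩ = ⟨n - 1, hn1⟩ := Fin.ext h
    have h2 : (⟨m, hm⟩ : Fin n) = σ.symm ⟨n - 1, hn1⟩ := by
      rw [← h1, Equiv.symm_apply_apply]
    exact congrArg Fin.val h2
  have hjs : ((Rop σ).symm x).val
      = if 0 < j ∧ j ≤ b then j - 1 else if j = 0 then b else j := by
    rw [hsymm x]
    have h1 : σ.symm x = ⟨j, hjlt⟩ := Fin.ext rfl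
    rw [h1, hδs j hjlt]
  by_cases hA : j = n - 1
  · -- rank-path end for both
    have hR : ((Rop σ).symm x).val = n - 1 := by
      rw [hjs]; split_ifs <;> omega
    apply Fin.ext
    rw [nextArc_val_last (Rop σ) x hR, nextArc_val_last' σ x j hjdef.symm hA]
  · have hj1 : j + 1 < n := by omega
    set v := (σ ⟨j + 1, hj1⟩).val with hvdef
    have hvlt : v < n := (σ _).isLt
    have hvI : v = n - 1 ↔ j + 1 = I := by
      constructor
      · exact huniq (j + 1) hj1
      · intro h
        have h2 : (⟨j + 1, hj1⟩ : Fin n) = ⟨I, hIlt⟩ := Fin.ext h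
        rw [hvdef, h2, hσI]
    by_cases hj0 : j = 0
    · -- B1
      have hn2 : 2 ≤ n := by omega
      have hjsv : ((Rop σ).symm x).val = b := by rw [hjs]; split_ifs <;> omega
      have hbne : b ≠ n - 1 := by omega
      have hblt : b + 1 < n := by omega
      have hδb1 : δ ⟨b + 1, hblt⟩ = ⟨b + 1, hblt⟩ := by
        apply Fin.ext; rw [hδval]; simp only [Fin.val_mk]; split_ifs <;> omega
      by_cases hI0 : I = 0
      · -- w = v, both mid
        have hw : ((Rop σ) ⟨b + 1, hblt⟩).val = v := by
          rw [happ, hδb1]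
          have h2 : (⟨b + 1, hblt⟩ : Fin n) = ⟨j + 1, hj1⟩ := Fin.ext (by simp only [Fin.val_mk]; omega)
          rw [h2]
        have hvne : v ≠ n - 1 := by
          intro h; have := hvI.mp h; omega
        apply Fin.ext
        rw [nextArc_val_mid' (Rop σ) x b hjsv hbne hblt (by rw [hw]; exact hvne),
          nextArc_val_mid' σ x j hjdef.symm hA hj1 (by exact hvne), hw]
      · -- I ≥ 1 : Rop side hits the mark
        have hI1 : 1 ≤ I := by omega
        have hw : ((Rop σ) ⟨b + 1, hblt⟩).val = n - 1 := by
          rw [happ, hδb1]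
          have h2 : (⟨b + 1, hblt⟩ : Fin n) = ⟨I, hIlt⟩ := Fin.ext (by simp only [Fin.val_mk]; omega)
          rw [h2, hσI]
        have hRres := nextArc_val_mark' (Rop σ) x b hjsv hbne hblt hn hw
        by_cases hv1 : v = n - 1
        · -- I = 1, b = 0
          have hIeq : I = 1 := by have := hvI.mp hv1; omega
          have hb0 : b = 0 := by omega
          have hδ0 : δ ⟨0, hn⟩ = ⟨0, hn⟩ := by
            apply Fin.ext; rw [hδval]; simp only [Fin.val_mk]; split_ifs <;> omega
          apply Fin.ext
          rw [hRres, nextArc_val_mark' σ x j hjdef.symm hA hj1 hn hv1, happ, hδ0]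
        · -- I ≥ 2, b ≥ 1
          have hb1 : 1 ≤ b := by
            have : j + 1 ≠ I := fun h => hv1 (hvI.mpr h); omega
          have h1n : 1 < n := by omega
          have hδ0 : δ ⟨0, hn⟩ = ⟨1, h1n⟩ := by
            apply Fin.ext; rw [hδval]; simp only [Fin.val_mk]; split_ifs <;> omega
          apply Fin.ext
          rw [hRres, nextArc_val_mid' σ x j hjdef.symm hA hj1 (by exact hv1), happ, hδ0]
          have h2 : (⟨1, h1n⟩ : Fin n) = ⟨j + 1, hj1⟩ := Fin.ext (by simp only [Fin.val_mk]; omega)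
          rw [h2]
    · by_cases hjb : j ≤ b
      · -- B2
        have hjsv : ((Rop σ).symm x).val = j - 1 := by rw [hjs]; split_ifs <;> omega
        have hjsne : j - 1 ≠ n - 1 := by omega
        have hjslt : (j - 1) + 1 < n := by omega
        have halign : (⟨(j - 1) + 1, hjslt⟩ : Fin n) = ⟨j, hjlt⟩ := Fin.ext (by simp only [Fin.val_mk]; omega)
        by_cases hjb2 : j < b
        · -- B2a: w = v, both mid
          have hδj : δ ⟨j, hjlt⟩ = ⟨j + 1, hj1⟩ := by
            apply Fin.ext; rw [hδval]; simp only [Fin.val_mk]; split_ifs <;> omega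
          have hw : ((Rop σ) ⟨(j - 1) + 1, hjslt⟩).val = v := by
            rw [happ, halign, hδj]
          have hvne : v ≠ n - 1 := by
            intro h; have := hvI.mp h; omega
          apply Fin.ext
          rw [nextArc_val_mid' (Rop σ) x (j - 1) hjsv hjsne hjslt (by rw [hw]; exact hvne),
            nextArc_val_mid' σ x j hjdef.symm hA hj1 (by exact hvne), hw]
        · -- B2b: j = b
          have hjeqb : j = b := by omega
          have hI1 : I = b + 1 := by
            rcases Nat.eq_zero_or_pos I with h | h
            · omega
            · omega
          have hδj : δ ⟨j, hjlt⟩ = ⟨0, hn⟩ := by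
            apply Fin.ext; rw [hδval]; simp only [Fin.val_mk]; split_ifs <;> omega
          have hw : ((Rop σ) ⟨(j - 1) + 1, hjslt⟩).val = (σ ⟨0, hn⟩).val := by
            rw [happ, halign, hδj]
          have hv1 : v = n - 1 := hvI.mpr (by omega)
          have hs0ne : (σ ⟨0, hn⟩).val ≠ n - 1 := by
            intro h; have := huniq 0 hn h; omega
          apply Fin.ext
          rw [nextArc_val_mid' (Rop σ) x (j - 1) hjsv hjsne hjslt (by rw [hw]; exact hs0ne),
            nextArc_val_mark' σ x j hjdef.symm hA hj1 hn hv1, hw]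
      · -- B3: j > b, w = v, both mid
        have hjsv : ((Rop σ).symm x).val = j := by rw [hjs]; split_ifs <;> omega
        have hδj : δ ⟨j + 1, hj1⟩ = ⟨j + 1, hj1⟩ := by
          apply Fin.ext; rw [hδval]; simp only [Fin.val_mk]; split_ifs <;> omega
        have hw : ((Rop σ) ⟨j + 1, hj1⟩).val = v := by rw [happ, hδj]
        have hvne : v ≠ n - 1 := by
          intro h; have := hvI.mp h; omega
        apply Fin.ext
        rw [nextArc_val_mid' (Rop σ) x j hjsv hA hj1 (by rw [hw]; exact hvne),
          nextArc_val_mid' σ x j hjdef.symm hA hj1 (by exact hvne), hw]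
lemma nextArc_Lop {n : ℕ} (σ : Equiv.Perm (Fin n)) (hn : 0 < n) (x : Fin n) :
    nextArc (Lop σ) (intervalCycle n ((σ ⟨0, hn⟩).val + 1) (n - 1) x)
      = intervalCycle n ((σ ⟨0, hn⟩).val + 1) (n - 1) (nextArc σ x) := by
  set s0 := (σ ⟨0, hn⟩).val with hs0def
  have hs0lt : s0 < n := (σ _).isLt
  set γ := intervalCycle n (s0 + 1) (n - 1) with hγdef
  have hLop : Lop σ = γ * σ := by rw [Lop, dif_pos hn]
  by_cases htriv : s0 = n - 1
  · -- γ is the identity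
    have hγ1 : γ = 1 := by
      rw [hγdef]; exact intervalCycle_id _ _ (by omega)
    rw [hLop, hγ1, one_mul]
    simp
  · have hbn : n - 1 < n := by omega
    have ha : s0 + 1 ≤ n - 1 := by omega
    have hn2 : 2 ≤ n := by omega
    have hγval : ∀ (m : ℕ) (hm : m < n), (γ ⟨m, hm⟩).val =
        if s0 + 1 ≤ m ∧ m < n - 1 then m + 1 else if m = n - 1 then s0 + 1 else m := by
      intro m hm
      rw [hγdef, intervalCycle_val (s0 + 1) (n - 1) ha hbn]
    have happ : ∀ y : Fin n, (Lop σ) y = γ (σ y) := by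
      intro y; rw [hLop]; rfl
    have hsymm : ((Lop σ).symm (γ x)) = σ.symm x := by
      rw [hLop, Equiv.Perm.mul_def, Equiv.symm_trans_apply, Equiv.symm_apply_apply]
    set j := (σ.symm x).val with hjdef
    have hjlt : j < n := (σ.symm x).isLt
    have hjs : ((Lop σ).symm (γ x)).val = j := by rw [hsymm]
    have huniq0 : ∀ (m : ℕ) (hm : m < n), (σ ⟨m, hm⟩).val = s0 → m = 0 := by
      intro m hm h
      have h1 : σ ⟨m, hm⟩ = σ ⟨0, hn⟩ := Fin.ext h
      have h2 := σ.injective h1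
      exact congrArg Fin.val h2
    have hγ0 : (γ ⟨0, hn⟩).val = 0 := by
      rw [hγval 0 hn]; split_ifs <;> omega
    by_cases hA : j = n - 1
    · -- rank-path endpoint
      have hres : (nextArc σ x).val = 0 := nextArc_val_last' σ x j hjdef.symm hA
      have hres' : nextArc σ x = ⟨0, hn⟩ := Fin.ext hres
      apply Fin.ext
      rw [nextArc_val_last' (Lop σ) (γ x) j hjs hA, hres', hγ0]
    · have hj1 : j + 1 < n := by omega
      set v := (σ ⟨j + 1, hj1⟩).val with hvdef
      have hvlt : v < n := (σ _).isLt
      have hvne0 : v ≠ s0 := by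
        intro h; have := huniq0 (j + 1) hj1 h; omega
      have halignv : σ ⟨j + 1, hj1⟩ = ⟨v, hvlt⟩ := Fin.ext rfl
      have hw : ((Lop σ) ⟨j + 1, hj1⟩).val = (γ ⟨v, hvlt⟩).val := by
        rw [happ, halignv]
      have hγs0 : (γ ⟨s0, hs0lt⟩).val = s0 := by
        rw [hγval s0 hs0lt]; split_ifs <;> omega
      by_cases hv1 : v = n - 1
      · -- σ-side hits the mark
        have hs1lt : s0 + 1 < n := by omega
        have hresσ : nextArc σ x = ⟨s0 + 1, hs1lt⟩ := by
          apply Fin.ext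
          rw [nextArc_val_mark' σ x j hjdef.symm hA hj1 hn (by rw [← hvdef]; exact hv1)]
        have hγa : (γ ⟨s0 + 1, hs1lt⟩).val =
            if s0 + 1 < n - 1 then s0 + 2 else s0 + 1 := by
          rw [hγval (s0 + 1) hs1lt]; split_ifs <;> omega
        have hwv : ((Lop σ) ⟨j + 1, hj1⟩).val = s0 + 1 := by
          rw [hw, hγval v hvlt]; split_ifs <;> omega
        by_cases hcase : s0 + 1 = n - 1
        · -- w = n - 1 : L-side also hits the mark
          have hres := nextArc_val_mark' (Lop σ) (γ x) j hjs hA hj1 hn (by omega)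
          apply Fin.ext
          rw [hres, hresσ, hγa, happ]
          have h0 : σ ⟨0, hn⟩ = ⟨s0, hs0lt⟩ := Fin.ext rfl
          rw [h0, hγs0]
          split_ifs <;> omega
        · have hres := nextArc_val_mid' (Lop σ) (γ x) j hjs hA hj1 (by omega)
          apply Fin.ext
          rw [hres, hresσ, hγa, hwv]
          split_ifs <;> omega
      · -- σ-side mid
        have hvp : v + 1 < n := by omega
        have hresσ : nextArc σ x = ⟨v + 1, hvp⟩ := by
          apply Fin.ext
          rw [nextArc_val_mid' σ x j hjdef.symm hA hj1 (by rw [← hvdef]; exact hv1)]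
        by_cases hva : v < s0 + 1
        · -- w = v, L mid
          have hwv : ((Lop σ) ⟨j + 1, hj1⟩).val = v := by
            rw [hw, hγval v hvlt]; split_ifs <;> omega
          have hres := nextArc_val_mid' (Lop σ) (γ x) j hjs hA hj1 (by omega)
          apply Fin.ext
          rw [hres, hresσ, hγval (v + 1) hvp, hwv]
          split_ifs <;> omega
        · -- s0 + 1 ≤ v ≤ n - 2 : w = v + 1
          have hwv : ((Lop σ) ⟨j + 1, hj1⟩).val = v + 1 := by
            rw [hw, hγval v hvlt]; split_ifs <;> omega
          by_cases hcase : v + 1 = n - 1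
          · -- L-side hits the mark
            have hres := nextArc_val_mark' (Lop σ) (γ x) j hjs hA hj1 hn (by omega)
            apply Fin.ext
            rw [hres, hresσ, hγval (v + 1) hvp, happ]
            have h0 : σ ⟨0, hn⟩ = ⟨s0, hs0lt⟩ := Fin.ext rfl
            rw [h0, hγs0]
            split_ifs <;> omega
          · have hres := nextArc_val_mid' (Lop σ) (γ x) j hjs hA hj1 (by omega)
            apply Fin.ext
            rw [hres, hresσ, hγval (v + 1) hvp, hwv]
            split_ifs <;> omega
lemma gamma_fixes_zero {n : ℕ} (s0 : ℕ) (hn : 0 < n) :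
    intervalCycle n (s0 + 1) (n - 1) ⟨0, hn⟩ = ⟨0, hn⟩ := by
  by_cases hab : s0 + 1 ≤ n - 1 ∧ n - 1 < n
  · apply Fin.ext
    rw [intervalCycle_val _ _ hab.1 hab.2]
    simp only [Fin.val_mk]
    split_ifs <;> omega
  · rw [intervalCycle_id _ _ hab]; rfl

lemma invariants_Lop {n : ℕ} (σ : Equiv.Perm (Fin n)) :
    cycleInv (Lop σ) = cycleInv σ ∧ rank (Lop σ) = rank σ := by
  rcases Nat.eq_zero_or_pos n with rfl | hn
  · have h : Lop σ = σ := by rw [Lop, dif_neg (by omega)]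
    rw [h]; exact ⟨rfl, rfl⟩
  · exact invariants_of_conj σ (Lop σ) (intervalCycle n ((σ ⟨0, hn⟩).val + 1) (n - 1))
      (nextArc_Lop σ hn) (fun hn' => gamma_fixes_zero _ hn')

lemma invariants_Rop {n : ℕ} (σ : Equiv.Perm (Fin n)) :
    cycleInv (Rop σ) = cycleInv σ ∧ rank (Rop σ) = rank σ := by
  refine invariants_of_conj σ (Rop σ) 1 ?_ (fun hn' => rfl)
  intro x
  simp only [Equiv.Perm.one_apply]
  exact nextArc_Rop σ x

lemma irreducible_Lop {n : ℕ} (σ : Equiv.Perm (Fin n)) (hσ : Irreducible σ) :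
    Irreducible (Lop σ) := by
  intro k hk0 hkn h
  have hn : 0 < n := by omega
  set s0 := (σ ⟨0, hn⟩).val with hs0def
  have hs0lt : s0 < n := (σ _).isLt
  set γ := intervalCycle n (s0 + 1) (n - 1) with hγdef
  have hLop : Lop σ = γ * σ := by rw [Lop, dif_pos hn]
  apply hσ k hk0 hkn
  set P := Finset.univ.filter (fun i : Fin n => i.val < k) with hPdef
  set T := Finset.univ.filter (fun i : Fin n => n - k ≤ i.val) with hTdef
  have h' : (P.image σ).image γ = T := by
    rw [← h, hLop, Equiv.Perm.coe_mul, ← Finset.image_image]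
  -- γ fixes s0
  have hγfix : (γ ⟨s0, hs0lt⟩).val = s0 := by
    by_cases htriv : s0 = n - 1
    · rw [hγdef, intervalCycle_id _ _ (by omega)]; rfl
    · rw [hγdef, intervalCycle_val _ _ (by omega) (by omega)]
      simp only [Fin.val_mk]
      split_ifs <;> omega
  have hσ0mem : σ ⟨0, hn⟩ ∈ P.image σ :=
    Finset.mem_image_of_mem σ (by simp [hPdef]; omega)
  have hs0T : n - k ≤ s0 := by
    have h1 : γ (σ ⟨0, hn⟩) ∈ T := by
      rw [← h']; exact Finset.mem_image_of_mem γ hσ0mem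
    rw [hTdef] at h1
    simp only [Finset.mem_filter, Finset.mem_univ, true_and] at h1
    have h2 : σ ⟨0, hn⟩ = ⟨s0, hs0lt⟩ := Fin.ext rfl
    rw [h2] at h1
    omega
  have hiff : ∀ t : Fin n, n - k ≤ (γ t).val ↔ n - k ≤ t.val := by
    intro t
    by_cases htriv : s0 = n - 1
    · rw [hγdef, intervalCycle_id _ _ (by omega)]
      rfl
    · have h2 : γ t = γ ⟨t.val, t.isLt⟩ := by rw [Fin.eta]
      rw [h2, hγdef, intervalCycle_val _ _ (by omega) (by omega)]
      simp only [Fin.val_mk]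
      have := t.isLt
      split_ifs <;> omega
  ext z
  rw [hTdef]
  simp only [Finset.mem_filter, Finset.mem_univ, true_and]
  constructor
  · intro hz
    have h1 : γ z ∈ T := by rw [← h']; exact Finset.mem_image_of_mem γ hz
    rw [hTdef] at h1
    simp only [Finset.mem_filter, Finset.mem_univ, true_and] at h1
    exact (hiff z).mp h1
  · intro hz
    have h1 : γ z ∈ T := by
      rw [hTdef]
      simp only [Finset.mem_filter, Finset.mem_univ, true_and]
      exact (hiff z).mpr hz
    rw [← h'] at h1
    obtain ⟨w, hw, hweq⟩ := Finset.mem_image.mp h1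
    rwa [← γ.injective hweq]

lemma irreducible_Rop {n : ℕ} (σ : Equiv.Perm (Fin n)) (hσ : Irreducible σ) :
    Irreducible (Rop σ) := by
  intro k hk0 hkn h
  have hn : 0 < n := by omega
  have hn1 : n - 1 < n := by omega
  set I := (σ.symm ⟨n - 1, hn1⟩).val with hIdef
  have hIlt : I < n := (σ.symm _).isLt
  set b := I - 1 with hbdef
  have hbn : b < n := by omega
  set δ := intervalCycle n 0 b with hδdef
  have hRop : Rop σ = σ * δ := by rw [Rop, dif_pos hn]
  set P := Finset.univ.filter (fun i : Fin n => i.val < k) with hPdef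
  set T := Finset.univ.filter (fun i : Fin n => n - k ≤ i.val) with hTdef
  have h' : (P.image δ).image σ = T := by
    rw [← h, hRop, Equiv.Perm.coe_mul, ← Finset.image_image]
  have hδval : ∀ (m : ℕ) (hm : m < n),
      (δ ⟨m, hm⟩).val = if m < b then m + 1 else if m = b then 0 else m := by
    intro m hm
    rw [hδdef, intervalCycle_val 0 b (Nat.zero_le b) hbn]
    simp only [Nat.zero_le, true_and]
  by_cases hkb : k ≤ b
  · -- the preimage of n-1 cannot be reached
    exfalso
    have hmem : (⟨n - 1, hn1⟩ : Fin n) ∈ T := by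
      rw [hTdef]; simp only [Finset.mem_filter, Finset.mem_univ, true_and]
      omega
    rw [← h'] at hmem
    obtain ⟨w, hw, hweq⟩ := Finset.mem_image.mp hmem
    obtain ⟨i, hi, hieq⟩ := Finset.mem_image.mp hw
    rw [hPdef] at hi
    simp only [Finset.mem_filter, Finset.mem_univ, true_and] at hi
    -- σ w = n-1 so w = σ.symm (n-1), w.val = I
    have hwI : w.val = I := by
      have h1 : w = σ.symm ⟨n - 1, hn1⟩ := by
        rw [← hweq, Equiv.symm_apply_apply]
      rw [h1]
    have hieta : δ i = δ ⟨i.val, i.isLt⟩ := by rw [Fin.eta]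
    have hδi : (δ i).val = i.val + 1 := by
      rw [hieta, hδval i.val i.isLt]
      split_ifs <;> omega
    rw [← hieq] at hwI
    omega
  · -- δ maps P to itself
    have hPδ : P.image δ = P := by
      apply Finset.eq_of_subset_of_card_le
      · intro z hz
        obtain ⟨i, hi, hieq⟩ := Finset.mem_image.mp hz
        rw [hPdef] at hi ⊢
        simp only [Finset.mem_filter, Finset.mem_univ, true_and] at hi ⊢
        have hieta : δ i = δ ⟨i.val, i.isLt⟩ := by rw [Fin.eta]
        have := hδval i.val i.isLt
        rw [← hieq, hieta, this]
        split_ifs <;> omega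
      · rw [Finset.card_image_of_injective _ δ.injective]
    rw [hPδ] at h'
    exact hσ k hk0 hkn h'

lemma requiv_invariant {n : ℕ} (σ τ : Equiv.Perm (Fin n)) (h : REquiv σ τ) :
    cycleInv τ = cycleInv σ ∧ rank τ = rank σ := by
  induction h with
  | rel a b hab =>
    rcases hab with rfl | rfl
    · exact invariants_Lop a
    · exact invariants_Rop a
  | refl a => exact ⟨rfl, rfl⟩
  | symm a b _ ih => exact ⟨ih.1.symm, ih.2.symm⟩
  | trans a b c _ _ ih1 ih2 => exact ⟨ih2.1.trans ih1.1, ih2.2.trans ih1.2⟩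

/-- The operators `L` and `R` preserve irreducibility and the cycle invariant
`(λ, r)`; consequently `(λ, r)` is constant on every Rauzy class of irreducible
permutations. -/
theorem cycle_invariant_invariance (n : ℕ) (σ : Equiv.Perm (Fin n)) (hσ : Irreducible σ) :
    Irreducible (Lop σ) ∧ Irreducible (Rop σ) ∧
    cycleInv (Lop σ) = cycleInv σ ∧ rank (Lop σ) = rank σ ∧
    cycleInv (Rop σ) = cycleInv σ ∧ rank (Rop σ) = rank σ ∧
    ∀ τ : Equiv.Perm (Fin n), REquiv σ τ →
      cycleInv τ = cycleInv σ ∧ rank τ = rank σ := by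
  exact ⟨irreducible_Lop σ hσ, irreducible_Rop σ hσ,
    (invariants_Lop σ).1, (invariants_Lop σ).2,
    (invariants_Rop σ).1, (invariants_Rop σ).2,
    fun τ h => requiv_invariant σ τ h⟩

end Rauzy
end

section
/- For every permutation σ of {1,…,n}: Ā(Lσ) = Ā(σ), Ā(Rσ) = Ā(σ), Ā(L'σ) = Ā(σ) and Ā(R'σ) = Ā(σ). In particular the sign s(σ) is constant on Rauzy classes and on extended Rauzy classes. -/
open Equiv

namespace Rauzy

/-!
Identify a subset `I ⊆ {1,…,n}` with its indicator vector `x ∈ 𝔽₂ⁿ`. Then `|I| + χ(I)` is the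
quadratic form `q_σ(x) = ∑ xᵢ + ∑_{i<j, σ(i)<σ(j)} xᵢ xⱼ` and `Ā(σ)` is its Gauss sum
`∑ₓ (-1)^{q_σ(x)}`, which is unchanged when `q_σ` is composed with an invertible linear map.
The operator `L` moves the value `n` to just above `σ(1)`, so it only changes the pairs
containing `p = σ⁻¹(n)`, and the new form is `q_σ` composed with the transvection
`x ↦ x + x_p e₁`. The other operators reduce to `L`: `Ā` is invariant under `σ ↦ σ⁻¹` and under
conjugation by the reversal `ρ`, and `R σ = ρ (L (ρ σ⁻¹ ρ))⁻¹ ρ`.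
-/

section

open Finset

section QuadraticForm

variable {α : Type*} [DecidableEq α]

def transvection (p t : α) (x : α → ZMod 2) : α → ZMod 2 :=
  x + Pi.single t (x p)

theorem transvection_involutive {p t : α} (hpt : p ≠ t) :
    Function.Involutive (transvection p t) := by
  intro x
  funext i
  simp only [transvection, Pi.add_apply, Pi.single_apply, if_neg hpt, add_zero]
  split_ifs <;> simp [add_assoc, CharTwo.add_self_eq_zero]

variable [Fintype α]

def quadForm (B : α → α → ZMod 2) (x : α → ZMod 2) : ZMod 2 :=
  ∑ i, x i + ∑ i, ∑ j, B i j * x i * x j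

def gaussSum (B : α → α → ZMod 2) : ℤ :=
  ∑ x : α → ZMod 2, (-1) ^ (quadForm B x).val

theorem quadForm_transvection (B : α → α → ZMod 2) (p t : α) (x : α → ZMod 2) :
    quadForm B (transvection p t x) =
      quadForm B x + x p * (1 + ∑ j, (B t j + B j t) * x j) + B t t * x p ^ 2 := by
  simp only [quadForm, transvection, Pi.add_apply, Pi.single_apply, mul_add, add_mul,
    sum_add_distrib, mul_ite, ite_mul, mul_zero, zero_mul, sum_ite_eq', sum_ite_irrel,
    sum_const_zero, mem_univ, if_true, mul_sum]
  ring_nf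

theorem quadForm_of_eq_add_row_col (B B' : α → α → ZMod 2) (p : α) (u v : α → ZMod 2)
    (h : ∀ i j, B' i j = B i j + (if i = p then u j else 0) + (if j = p then v i else 0))
    (x : α → ZMod 2) :
    quadForm B' x = quadForm B x + x p * ∑ j, (u j + v j) * x j := by
  simp only [quadForm, h, add_mul, mul_add, sum_add_distrib, ite_mul, zero_mul, sum_ite_eq',
    sum_ite_irrel, sum_const_zero, mem_univ, if_true, mul_sum]
  simp only [add_assoc]
  congr 2
  rw [← sum_add_distrib, ← sum_add_distrib]
  exact sum_congr rfl fun j _ => by ring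

theorem gaussSum_eq_of_transvection {B B' : α → α → ZMod 2} {p t : α} (hpt : p ≠ t)
    (h : ∀ x, quadForm B' x = quadForm B (transvection p t x)) : gaussSum B' = gaussSum B :=
  Fintype.sum_equiv (transvection_involutive hpt).toPerm _ _ fun x => by
    rw [h, Function.Involutive.coe_toPerm]

theorem gaussSum_eq_of_perm_transpose {B B' : α → α → ZMod 2} (φ : Perm α)
    (h : ∀ i j, B' (φ i) (φ j) = B j i) : gaussSum B' = gaussSum B := by
  have sum_sum_comp (F : α → α → ZMod 2) : ∑ i, ∑ j, F (φ i) (φ j) = ∑ i, ∑ j, F i j :=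
    (sum_congr rfl fun i _ => Equiv.sum_comp φ (F (φ i))).trans
      (Equiv.sum_comp φ fun i => ∑ j, F i j)
  refine Fintype.sum_equiv (φ.symm.arrowCongr (Equiv.refl _)) _ _ fun x => ?_
  congr 2
  simp only [quadForm, Equiv.arrowCongr_apply, Equiv.symm_symm, Equiv.coe_refl,
    Function.comp_apply, id_eq, ← h]
  rw [Equiv.sum_comp φ x, ← sum_sum_comp fun i j => B' i j * x i * x j, sum_comm]
  exact congrArg _ (sum_congr rfl fun _ _ => sum_congr rfl fun _ _ => by ring)

def indicator (I : Finset α) (i : α) : ZMod 2 := if i ∈ I then 1 else 0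

theorem indicator_bijective : Function.Bijective (indicator (α := α)) := by
  refine ⟨fun I J h => ?_, fun x => ⟨univ.filter (x · = 1), ?_⟩⟩
  · ext i
    have hi := congrFun h i
    by_cases hI : i ∈ I <;> by_cases hJ : i ∈ J <;> simp_all [indicator]
  · funext i
    have hx : ∀ a : ZMod 2, (if a = 1 then 1 else 0) = a := by decide
    simpa [indicator] using hx (x i)

theorem sum_indicator (I : Finset α) : ∑ i, indicator I i = I.card := by
  simp [indicator]

end QuadraticForm

variable {n : ℕ}

def nonCrossing (σ : Perm (Fin n)) (i j : Fin n) : ZMod 2 :=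
  if i < j ∧ σ i < σ j then 1 else 0

theorem natCast_card_add_chi (σ : Perm (Fin n)) (I : Finset (Fin n)) :
    ((I.card + chi σ I : ℕ) : ZMod 2) = quadForm (nonCrossing σ) (indicator I) := by
  rw [Nat.cast_add, ← sum_indicator, chi, natCast_card_filter, sum_product, quadForm]
  congr 1
  simp [indicator, nonCrossing, ite_and]

theorem arfBar_eq_gaussSum (σ : Perm (Fin n)) : arfBar σ = gaussSum (nonCrossing σ) := by
  rw [arfBar, gaussSum, powerset_univ]
  refine Fintype.sum_bijective _ indicator_bijective _ _ fun I => ?_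
  rw [← natCast_card_add_chi, ZMod.val_natCast, ← neg_one_pow_eq_pow_mod_two]

theorem intervalCycle_apply_val {a b : ℕ} (hab : a ≤ b ∧ b < n) (v : Fin n) :
    (intervalCycle n a b v).val =
      if a ≤ v.val ∧ v.val < b then v.val + 1 else if v.val = b then a else v.val := by
  rw [intervalCycle, dif_pos hab]
  rfl

theorem nonCrossing_self (σ : Perm (Fin n)) (i : Fin n) : nonCrossing σ i i = 0 := by
  simp [nonCrossing]

theorem nonCrossing_Lop (σ : Perm (Fin n)) (hn : 0 < n) {p : Fin n} (hp : (σ p).val = n - 1)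
    (hdeg : (σ ⟨0, hn⟩).val ≠ n - 1) (i j : Fin n) :
    nonCrossing (Lop σ) i j = nonCrossing σ i j
      + (if i = p then (if p < j ∧ σ ⟨0, hn⟩ < σ j then 1 else 0) else 0)
      + (if j = p then (if i < p ∧ σ ⟨0, hn⟩ < σ i then 1 else 0) else 0) := by
  have hpk : ∀ k, k = p ↔ (σ k).val = n - 1 := fun k => by
    rw [← hp, Fin.val_inj, σ.injective.eq_iff]
  have hpi : i.val = p.val ↔ (σ i).val = n - 1 := by rw [Fin.val_inj, hpk]
  have hpj : j.val = p.val ↔ (σ j).val = n - 1 := by rw [Fin.val_inj, hpk]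
  have hσ : (σ i).val = (σ j).val ↔ i.val = j.val := by
    rw [Fin.val_inj, σ.injective.eq_iff, Fin.val_inj]
  have := (σ i).isLt
  have := (σ j).isLt
  have := (σ ⟨0, hn⟩).isLt
  rw [Lop, dif_pos hn]
  simp only [nonCrossing, Perm.mul_apply, Fin.lt_def, hpk,
    intervalCycle_apply_val (show (σ ⟨0, hn⟩).val + 1 ≤ n - 1 ∧ n - 1 < n by omega)]
  split_ifs <;> first | rfl | decide | omega

theorem nonCrossing_zero_add_swap (σ : Perm (Fin n)) (hn : 0 < n) {p : Fin n}
    (hp : (σ p).val = n - 1) (hdeg : (σ ⟨0, hn⟩).val ≠ n - 1) (j : Fin n) :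
    nonCrossing σ ⟨0, hn⟩ j + nonCrossing σ j ⟨0, hn⟩ =
      (if p < j ∧ σ ⟨0, hn⟩ < σ j then 1 else 0)
        + (if j < p ∧ σ ⟨0, hn⟩ < σ j then 1 else 0)
        + (if j = p then 1 else 0) := by
  have hpj : j.val = p.val ↔ (σ j).val = n - 1 := by
    rw [Fin.val_inj, ← hp, Fin.val_inj, σ.injective.eq_iff]
  have hσ : (σ j).val = (σ ⟨0, hn⟩).val ↔ j.val = 0 := by
    rw [Fin.val_inj, σ.injective.eq_iff, Fin.ext_iff]
  have := (σ j).isLt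
  have := (σ ⟨0, hn⟩).isLt
  simp only [nonCrossing, Fin.lt_def, Fin.ext_iff]
  split_ifs <;> first | rfl | decide | omega

theorem arfBar_Lop (σ : Perm (Fin n)) : arfBar (Lop σ) = arfBar σ := by
  rcases Nat.eq_zero_or_pos n with rfl | hn
  · exact congrArg arfBar (Subsingleton.elim _ _)
  by_cases hdeg : (σ ⟨0, hn⟩).val = n - 1
  · rw [Lop, dif_pos hn, intervalCycle, dif_neg (by omega), one_mul]
  set p := σ.symm ⟨n - 1, by omega⟩
  have hp : (σ p).val = n - 1 := by simp [p]
  have hpz : p ≠ ⟨0, hn⟩ := fun h => hdeg (h ▸ hp)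
  rw [arfBar_eq_gaussSum, arfBar_eq_gaussSum]
  refine gaussSum_eq_of_transvection hpz fun x => ?_
  -- `a * (1 + a) = 0` in `𝔽₂`
  have hx : ∀ a s : ZMod 2, a * s = a * (1 + (s + a)) := by decide
  rw [quadForm_of_eq_add_row_col _ _ p _ _ (nonCrossing_Lop σ hn hp hdeg),
    quadForm_transvection, nonCrossing_self, zero_mul, add_zero]
  simp only [nonCrossing_zero_add_swap σ hn hp hdeg, add_mul, sum_add_distrib, ite_mul, one_mul,
    zero_mul, sum_ite_eq', mem_univ, if_true]
  rw [hx (x p)]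

-- The diagram of `σ` turned by a half-turn.
def revInv (σ : Perm (Fin n)) : Perm (Fin n) := Fin.revPerm * σ⁻¹ * Fin.revPerm

theorem arfBar_revPerm_conj (σ : Perm (Fin n)) :
    arfBar (Fin.revPerm * σ * Fin.revPerm) = arfBar σ := by
  rw [arfBar_eq_gaussSum, arfBar_eq_gaussSum]
  refine gaussSum_eq_of_perm_transpose Fin.revPerm fun i j => ?_
  simp only [nonCrossing, Perm.mul_apply, Fin.revPerm_apply, Fin.rev_rev, Fin.rev_lt_rev]

theorem arfBar_revInv (σ : Perm (Fin n)) : arfBar (revInv σ) = arfBar σ := by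
  rw [arfBar_eq_gaussSum, arfBar_eq_gaussSum]
  refine gaussSum_eq_of_perm_transpose (σ.trans Fin.revPerm) fun i j => ?_
  simp only [revInv, nonCrossing, Perm.mul_apply, Equiv.trans_apply, Fin.revPerm_apply,
    Fin.rev_rev, Fin.rev_lt_rev, Perm.coe_inv, symm_apply_apply, and_comm]

theorem arfBar_inv (σ : Perm (Fin n)) : arfBar σ⁻¹ = arfBar σ := by
  have h : σ⁻¹ = Fin.revPerm * revInv σ * Fin.revPerm := by
    ext i
    simp [revInv]
  rw [h, arfBar_revPerm_conj, arfBar_revInv]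

theorem intervalCycle_zero_zero (hn : 0 < n) : intervalCycle n 0 0 = 1 :=
  Equiv.ext fun v => Fin.ext <| by
    rw [intervalCycle_apply_val ⟨le_rfl, hn⟩]
    split_ifs <;> simp_all

theorem revPerm_conj_intervalCycle_inv {a b : ℕ} (hab : a ≤ b ∧ b < n) :
    (Fin.revPerm * intervalCycle n a b * Fin.revPerm)⁻¹ =
      intervalCycle n (n - 1 - b) (n - 1 - a) := by
  refine inv_eq_of_mul_eq_one_right (Equiv.ext fun v => Fin.ext ?_)
  have := v.isLt
  have hab' : n - 1 - b ≤ n - 1 - a ∧ n - 1 - a < n := by omega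
  simp only [Perm.mul_apply, Perm.one_apply, Fin.revPerm_apply, Fin.val_rev,
    intervalCycle_apply_val hab, intervalCycle_apply_val hab']
  split_ifs <;> omega

theorem Rop_eq_revInv_Lop_revInv (σ : Perm (Fin n)) : Rop σ = revInv (Lop (revInv σ)) := by
  rcases Nat.eq_zero_or_pos n with rfl | hn
  · exact Subsingleton.elim _ _
  set q := σ.symm ⟨n - 1, by omega⟩
  have hrev0 : Fin.rev ⟨0, hn⟩ = ⟨n - 1, by omega⟩ := Fin.ext (by simp [Fin.val_rev])
  have hq : (revInv σ ⟨0, hn⟩).val = n - 1 - q.val := by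
    simp only [revInv, Perm.mul_apply, Fin.revPerm_apply, hrev0, Fin.val_rev, Perm.coe_inv, q]
    omega
  have hρinv : (Fin.revPerm : Perm (Fin n))⁻¹ = Fin.revPerm := Fin.revPerm_symm
  have hρ : ∀ τ : Perm (Fin n), Fin.revPerm * (Fin.revPerm * τ) = τ := fun τ => by
    ext; simp
  have hLop : revInv (Lop (revInv σ)) =
      σ * (Fin.revPerm * intervalCycle n (n - q.val) (n - 1) * Fin.revPerm)⁻¹ := by
    rw [Lop, dif_pos hn, hq, show n - 1 - q.val + 1 = n - q.val by omega]
    simp only [revInv, mul_inv_rev, inv_inv, hρinv, mul_assoc, hρ]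
  rw [hLop, Rop, dif_pos hn]
  congr 1
  by_cases hq0 : q.val = 0
  · rw [hq0, Nat.zero_sub, intervalCycle_zero_zero hn, intervalCycle, dif_neg (by omega)]
    ext
    simp
  · rw [revPerm_conj_intervalCycle_inv ⟨by omega, by omega⟩]
    congr 1 <;> omega

theorem arfBar_Rop (σ : Perm (Fin n)) : arfBar (Rop σ) = arfBar σ := by
  rw [Rop_eq_revInv_Lop_revInv, arfBar_revInv, arfBar_Lop, arfBar_revInv]

theorem arfBar_Lext (σ : Perm (Fin n)) : arfBar (Lext σ) = arfBar σ := by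
  rw [Lext, arfBar_inv, arfBar_Lop, arfBar_inv]

theorem arfBar_Rext (σ : Perm (Fin n)) : arfBar (Rext σ) = arfBar σ := by
  rw [Rext, arfBar_inv, arfBar_Rop, arfBar_inv]

theorem sgn_eq_of_eqvGen {r : Perm (Fin n) → Perm (Fin n) → Prop}
    (h : ∀ σ τ, r σ τ → arfBar τ = arfBar σ) {σ τ : Perm (Fin n)}
    (hστ : Relation.EqvGen r σ τ) : sgn τ = sgn σ := by
  have hgen : Relation.EqvGen (InvImage Eq arfBar) σ τ :=
    Relation.EqvGen.mono (fun a b hab => (h a b hab).symm) σ τ hστ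
  rw [sgn, sgn, ((InvImage.equivalence _ _ eq_equivalence).eqvGen_iff.1 hgen)]

end

/-- The Arf invariant `Ā` is invariant under `L`, `R`, `L'` and `R'`; in particular
the sign `s` is constant on Rauzy classes and on extended Rauzy classes. -/
theorem arf_invariance (n : ℕ) (σ : Equiv.Perm (Fin n)) :
    arfBar (Lop σ) = arfBar σ ∧ arfBar (Rop σ) = arfBar σ ∧
    arfBar (Lext σ) = arfBar σ ∧ arfBar (Rext σ) = arfBar σ ∧
    (∀ τ : Equiv.Perm (Fin n), REquiv σ τ → sgn τ = sgn σ) ∧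
    (∀ τ : Equiv.Perm (Fin n), ExtEquiv σ τ → sgn τ = sgn σ) := by
  refine ⟨arfBar_Lop σ, arfBar_Rop σ, arfBar_Lext σ, arfBar_Rext σ,
    fun τ => sgn_eq_of_eqvGen ?_, fun τ => sgn_eq_of_eqvGen ?_⟩
  · rintro a b (rfl | rfl)
    exacts [arfBar_Lop a, arfBar_Rop a]
  · rintro a b (rfl | rfl | rfl | rfl)
    exacts [arfBar_Lop a, arfBar_Rop a, arfBar_Lext a, arfBar_Rext a]

end Rauzy
end

section
/- For every n ≥ 1, the Arf invariants of the identity permutation id_n of {1,…,n} are Ā(id_n) = 2^{(n+1)/2} cos((n+1)π/4) and A(id_n) = 2^{(n+1)/2} sin((n+1)π/4). Equivalently, since χ(I) = |I|(|I|−1)/2 for the identity, Ā(id_n) = Σ_{k=0}^{n} C(n,k) (−1)^{k + k(k−1)/2} = 2^{(n+1)/2} cos((n+1)π/4). -/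
open Equiv

namespace Rauzy

/-! ### Auxiliary lemmas for `arf_of_identity` -/

private theorem card_lt_pairs_aux {n : ℕ} (I : Finset (Fin n)) :
    ((I ×ˢ I).filter fun p => p.1 < p.2).card = I.card.choose 2 := by
  classical
  rw [← Finset.card_powersetCard 2 I]
  apply Finset.card_bij (fun p _ => ({p.1, p.2} : Finset (Fin n)))
  · rintro ⟨a, b⟩ hp
    simp only [Finset.mem_filter, Finset.mem_product] at hp
    rw [Finset.mem_powersetCard]
    constructor
    · intro x hx
      simp only [Finset.mem_insert, Finset.mem_singleton] at hx
      rcases hx with rfl | rfl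
      · exact hp.1.1
      · exact hp.1.2
    · rw [Finset.card_insert_of_notMem (by simp [hp.2.ne]), Finset.card_singleton]
  · rintro ⟨a, b⟩ hab ⟨c, d⟩ hcd h
    simp only [Finset.mem_filter, Finset.mem_product] at hab hcd
    have h1 : a ∈ ({c, d} : Finset (Fin n)) := by rw [← h]; simp
    have h2 : b ∈ ({c, d} : Finset (Fin n)) := by rw [← h]; simp
    simp only [Finset.mem_insert, Finset.mem_singleton] at h1 h2
    have hab2 : a < b := hab.2
    have hcd2 : c < d := hcd.2
    simp only [Fin.ext_iff] at h1 h2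
    simp only [Fin.lt_def] at hab2 hcd2
    simp only [Prod.ext_iff, Fin.ext_iff]
    omega
  · intro t ht
    rw [Finset.mem_powersetCard] at ht
    obtain ⟨a, b, hne, rfl⟩ := Finset.card_eq_two.mp ht.2
    have ha : a ∈ I := ht.1 (by simp)
    have hb : b ∈ I := ht.1 (by simp)
    rcases lt_or_gt_of_ne hne with h | h
    · exact ⟨(a, b), by simp [Finset.mem_filter, ha, hb, h], rfl⟩
    · exact ⟨(b, a), by simp [Finset.mem_filter, ha, hb, h], by
        simp [Finset.pair_comm]⟩

private theorem chi_one_aux {n : ℕ} (I : Finset (Fin n)) :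
    chi (1 : Equiv.Perm (Fin n)) I = I.card.choose 2 := by
  unfold chi
  simp only [Equiv.Perm.coe_one, id_eq, and_self]
  exact card_lt_pairs_aux I

private theorem arfBar_one_aux {n : ℕ} : arfBar (1 : Equiv.Perm (Fin n)) =
    ∑ k ∈ Finset.range (n + 1), (n.choose k : ℤ) * (-1) ^ (k + k * (k - 1) / 2) := by
  unfold arfBar
  simp only [chi_one_aux]
  rw [Finset.sum_powerset_apply_card (fun m => ((-1:ℤ)) ^ (m + m.choose 2))]
  simp only [Finset.card_univ, Fintype.card_fin, nsmul_eq_mul, Nat.choose_two_right]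

private theorem arfA_one_aux {n : ℕ} : arfA (1 : Equiv.Perm (Fin n)) =
    ∑ k ∈ Finset.range (n + 1), (n.choose k : ℤ) * (-1) ^ (k * (k - 1) / 2) := by
  unfold arfA
  simp only [chi_one_aux]
  rw [Finset.sum_powerset_apply_card (fun m => ((-1:ℤ)) ^ (m.choose 2))]
  simp only [Finset.card_univ, Fintype.card_fin, nsmul_eq_mul, Nat.choose_two_right]

private theorem pow_one_add_I_aux (n : ℕ) :
    (1 + Complex.I) ^ n =
      ((Real.sqrt 2 ^ n * Real.cos ((n : ℝ) * Real.pi / 4) : ℝ) : ℂ) +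
      ((Real.sqrt 2 ^ n * Real.sin ((n : ℝ) * Real.pi / 4) : ℝ) : ℂ) * Complex.I := by
  induction n with
  | zero => norm_num
  | succ n ih =>
    have hs : Real.sqrt 2 * Real.sqrt 2 = 2 := Real.mul_self_sqrt (by norm_num)
    set a := (n : ℝ) * Real.pi / 4 with ha
    have harg : ((n : ℝ) + 1) * Real.pi / 4 = a + Real.pi / 4 := by rw [ha]; ring
    have key : ∀ x y : ℝ, ((x:ℂ) + (y:ℂ) * Complex.I) * (1 + Complex.I)
        = ((x - y : ℝ):ℂ) + ((x + y : ℝ):ℂ) * Complex.I := by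
      intro x y
      have := Complex.I_sq
      push_cast
      linear_combination (x : ℂ) * this - (x:ℂ)*this + (y:ℂ) * this
    have e1 : Real.sqrt 2 ^ (n+1) * Real.cos (((n:ℝ)+1) * Real.pi / 4)
        = Real.sqrt 2 ^ n * Real.cos a - Real.sqrt 2 ^ n * Real.sin a := by
      rw [harg, Real.cos_add, Real.cos_pi_div_four, Real.sin_pi_div_four, pow_succ]
      linear_combination ((Real.cos a - Real.sin a) * Real.sqrt 2 ^ n / 2) * hs
    have e2 : Real.sqrt 2 ^ (n+1) * Real.sin (((n:ℝ)+1) * Real.pi / 4)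
        = Real.sqrt 2 ^ n * Real.cos a + Real.sqrt 2 ^ n * Real.sin a := by
      rw [harg, Real.sin_add, Real.cos_pi_div_four, Real.sin_pi_div_four, pow_succ]
      linear_combination ((Real.cos a + Real.sin a) * Real.sqrt 2 ^ n / 2) * hs
    rw [pow_succ, ih, key]
    push_cast [e1, e2]
    ring

private theorem sign_eq_I_aux (k : ℕ) :
    ((-1:ℝ)) ^ (k + k * (k - 1) / 2) = (Complex.I ^ k).re - (Complex.I ^ k).im ∧
    ((-1:ℝ)) ^ (k * (k - 1) / 2) = (Complex.I ^ k).re + (Complex.I ^ k).im := by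
  simp only [← Nat.choose_two_right]
  induction k using Nat.strong_induction_on with
  | _ k ih =>
    match k with
    | 0 => norm_num
    | 1 => norm_num
    | 2 => norm_num [pow_succ, Complex.I_sq]
    | 3 => norm_num [pow_succ, Complex.I_sq]
    | (m + 4) =>
      have hI : Complex.I ^ (m + 4) = Complex.I ^ m := by
        rw [pow_add, Complex.I_pow_four, mul_one]
      have hexp : (m + 4).choose 2 = m.choose 2 + (4 * m + 6) := by
        simp only [show m + 4 = (m+3)+1 from rfl, show m + 3 = (m+2)+1 from rfl,
          show m + 2 = (m+1)+1 from rfl, Nat.choose_succ_succ, Nat.choose_one_right,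
          Nat.choose_zero_right, Nat.succ_eq_add_one, Nat.reduceAdd]
        omega
      have heven : ∀ a b : ℕ, ((-1:ℝ)) ^ (a + 2 * b) = (-1) ^ a := by
        intro a b
        rw [pow_add, pow_mul]
        norm_num
      obtain ⟨ih1, ih2⟩ := ih m (by omega)
      constructor
      · have h5 : m + 4 + (m + 4).choose 2 = (m + m.choose 2) + 2 * (2 * m + 5) := by omega
        rw [h5, heven, hI, ih1]
      · have h5 : (m + 4).choose 2 = m.choose 2 + 2 * (2 * m + 3) := by omega
        rw [h5, heven, hI, ih2]

private theorem rpow_half_aux (n : ℕ) :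
    (2:ℝ) ^ (((n:ℝ) + 1)/2) = Real.sqrt 2 ^ (n + 1) := by
  have h : ((n:ℝ) + 1)/2 = (1/2 : ℝ) * ((n+1 : ℕ) : ℝ) := by push_cast; ring
  rw [h, Real.rpow_mul (by norm_num), Real.rpow_natCast, ← Real.sqrt_eq_rpow]

private theorem step_cos_aux (n : ℕ) :
    Real.sqrt 2 ^ (n+1) * Real.cos (((n:ℝ)+1) * Real.pi / 4)
    = Real.sqrt 2 ^ n * Real.cos ((n:ℝ) * Real.pi / 4)
      - Real.sqrt 2 ^ n * Real.sin ((n:ℝ) * Real.pi / 4) := by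
  have hs : Real.sqrt 2 * Real.sqrt 2 = 2 := Real.mul_self_sqrt (by norm_num)
  have harg : ((n : ℝ) + 1) * Real.pi / 4 = (n:ℝ) * Real.pi / 4 + Real.pi / 4 := by ring
  rw [harg, Real.cos_add, Real.cos_pi_div_four, Real.sin_pi_div_four, pow_succ]
  linear_combination ((Real.cos ((n:ℝ) * Real.pi / 4) - Real.sin ((n:ℝ) * Real.pi / 4))
    * Real.sqrt 2 ^ n / 2) * hs

private theorem step_sin_aux (n : ℕ) :
    Real.sqrt 2 ^ (n+1) * Real.sin (((n:ℝ)+1) * Real.pi / 4)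
    = Real.sqrt 2 ^ n * Real.cos ((n:ℝ) * Real.pi / 4)
      + Real.sqrt 2 ^ n * Real.sin ((n:ℝ) * Real.pi / 4) := by
  have hs : Real.sqrt 2 * Real.sqrt 2 = 2 := Real.mul_self_sqrt (by norm_num)
  have harg : ((n : ℝ) + 1) * Real.pi / 4 = (n:ℝ) * Real.pi / 4 + Real.pi / 4 := by ring
  rw [harg, Real.sin_add, Real.cos_pi_div_four, Real.sin_pi_div_four, pow_succ]
  linear_combination ((Real.cos ((n:ℝ) * Real.pi / 4) + Real.sin ((n:ℝ) * Real.pi / 4))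
    * Real.sqrt 2 ^ n / 2) * hs

private theorem binom_I_aux (n : ℕ) : ((1:ℂ) + Complex.I) ^ n
    = ∑ k ∈ Finset.range (n + 1), (n.choose k : ℂ) * Complex.I ^ k := by
  rw [add_comm, add_pow]
  refine Finset.sum_congr rfl fun k _ => ?_
  rw [one_pow, mul_one, mul_comm]

private theorem sum_cos_aux (n : ℕ) :
    ∑ k ∈ Finset.range (n+1), (n.choose k : ℝ) * (-1)^(k + k*(k-1)/2)
      = (2:ℝ) ^ (((n:ℝ)+1)/2) * Real.cos (((n:ℝ)+1) * Real.pi / 4) := by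
  rw [rpow_half_aux, step_cos_aux]
  have h1 : ∀ k, (n.choose k : ℝ) * (-1)^(k + k*(k-1)/2)
      = (((n.choose k : ℂ)) * Complex.I ^ k).re - (((n.choose k : ℂ)) * Complex.I ^ k).im := by
    intro k
    have := (sign_eq_I_aux k).1
    simp only [Complex.mul_re, Complex.mul_im, Complex.natCast_re, Complex.natCast_im]
    rw [this]; ring
  calc ∑ k ∈ Finset.range (n+1), (n.choose k : ℝ) * (-1)^(k + k*(k-1)/2)
      = (((1:ℂ) + Complex.I) ^ n).re - (((1:ℂ) + Complex.I) ^ n).im := by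
        rw [binom_I_aux, Complex.re_sum, Complex.im_sum, ← Finset.sum_sub_distrib]
        exact Finset.sum_congr rfl fun k _ => h1 k
    _ = _ := by
        rw [pow_one_add_I_aux]
        simp only [Complex.add_re, Complex.add_im, Complex.ofReal_re, Complex.ofReal_im,
          Complex.mul_re, Complex.mul_im, Complex.I_re, Complex.I_im]
        ring

private theorem sum_sin_aux (n : ℕ) :
    ∑ k ∈ Finset.range (n+1), (n.choose k : ℝ) * (-1)^(k*(k-1)/2)
      = (2:ℝ) ^ (((n:ℝ)+1)/2) * Real.sin (((n:ℝ)+1) * Real.pi / 4) := by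
  rw [rpow_half_aux, step_sin_aux]
  have h1 : ∀ k, (n.choose k : ℝ) * (-1)^(k*(k-1)/2)
      = (((n.choose k : ℂ)) * Complex.I ^ k).re + (((n.choose k : ℂ)) * Complex.I ^ k).im := by
    intro k
    have := (sign_eq_I_aux k).2
    simp only [Complex.mul_re, Complex.mul_im, Complex.natCast_re, Complex.natCast_im]
    rw [this]; ring
  calc ∑ k ∈ Finset.range (n+1), (n.choose k : ℝ) * (-1)^(k*(k-1)/2)
      = (((1:ℂ) + Complex.I) ^ n).re + (((1:ℂ) + Complex.I) ^ n).im := by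
        rw [binom_I_aux, Complex.re_sum, Complex.im_sum, ← Finset.sum_add_distrib]
        exact Finset.sum_congr rfl fun k _ => h1 k
    _ = _ := by
        rw [pow_one_add_I_aux]
        simp only [Complex.add_re, Complex.add_im, Complex.ofReal_re, Complex.ofReal_im,
          Complex.mul_re, Complex.mul_im, Complex.I_re, Complex.I_im]
        ring

/-- The Arf invariants of the identity permutation:
`Ā(id_n) = 2^((n+1)/2) cos((n+1)π/4)`, `A(id_n) = 2^((n+1)/2) sin((n+1)π/4)`,
and equivalently `Ā(id_n) = Σ_{k=0}^{n} C(n,k) (−1)^(k + k(k−1)/2)`. -/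
theorem arf_of_identity (n : ℕ) (hn : 1 ≤ n) :
    ((arfBar (1 : Equiv.Perm (Fin n)) : ℤ) : ℝ) =
        (2 : ℝ) ^ (((n : ℝ) + 1) / 2) * Real.cos (((n : ℝ) + 1) * Real.pi / 4) ∧
    ((arfA (1 : Equiv.Perm (Fin n)) : ℤ) : ℝ) =
        (2 : ℝ) ^ (((n : ℝ) + 1) / 2) * Real.sin (((n : ℝ) + 1) * Real.pi / 4) ∧
    arfBar (1 : Equiv.Perm (Fin n)) =
        ∑ k ∈ Finset.range (n + 1), (n.choose k : ℤ) * (-1) ^ (k + k * (k - 1) / 2) := by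
  refine ⟨?_, ?_, arfBar_one_aux⟩
  · rw [arfBar_one_aux]
    push_cast
    exact sum_cos_aux n
  · rw [arfA_one_aux]
    push_cast
    exact sum_sin_aux n


end Rauzy
end

section
/- Let σ be a permutation of {1,…,n} (n ≥ 0) and let σ⁺ be the permutation of {1,…,n+1} defined by σ⁺(i) = σ(i) for 1 ≤ i ≤ n and σ⁺(n+1) = n+1 (i.e. σ with one appended fixed point, an edge crossing no other edge). Then Ā(σ⁺) = Ā(σ) − A(σ) and A(σ⁺) = Ā(σ) + A(σ). -/
open Equiv

namespace Rauzy

/-- Appending a fixed point (an edge crossing no other edge) to `σ` transforms the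
pair of Arf sums by `Ā(σ⁺) = Ā(σ) − A(σ)` and `A(σ⁺) = Ā(σ) + A(σ)`. -/
theorem arf_append_fixed_point (n : ℕ) (σ : Equiv.Perm (Fin n))
    (σp : Equiv.Perm (Fin (n + 1)))
    (hcast : ∀ i : Fin n, σp i.castSucc = (σ i).castSucc)
    (hlast : σp (Fin.last n) = Fin.last n) :
    arfBar σp = arfBar σ - arfA σ ∧ arfA σp = arfBar σ + arfA σ := by
  classical
  have hchi : ∀ (m : ℕ) (τ : Equiv.Perm (Fin m)) (I : Finset (Fin m)),
      chi τ I = ∑ i ∈ I, ∑ j ∈ I, if i < j ∧ τ i < τ j then 1 else 0 := by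
    intro m τ I
    rw [chi, Finset.card_filter, Finset.sum_product]
  have hmem : ∀ J : Finset (Fin n), Fin.last n ∉ J.map Fin.castSuccEmb := by
    intro J hJ
    rw [Finset.mem_map] at hJ
    obtain ⟨a, -, ha⟩ := hJ
    exact (Fin.castSucc_lt_last a).ne ha
  have hchimap : ∀ J : Finset (Fin n), chi σp (J.map Fin.castSuccEmb) = chi σ J := by
    intro J
    rw [hchi, hchi, Finset.sum_map]
    refine Finset.sum_congr rfl fun i _ => ?_
    rw [Finset.sum_map]
    refine Finset.sum_congr rfl fun j _ => ?_
    simp only [Fin.coe_castSuccEmb, hcast, Fin.castSucc_lt_castSucc_iff]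
  have hchins : ∀ J : Finset (Fin n),
      chi σp (insert (Fin.last n) (J.map Fin.castSuccEmb)) = chi σ J + J.card := by
    intro J
    rw [hchi, Finset.sum_insert (hmem J)]
    have h1 : ∑ j ∈ insert (Fin.last n) (J.map Fin.castSuccEmb),
        (if Fin.last n < j ∧ σp (Fin.last n) < σp j then 1 else 0) = 0 := by
      refine Finset.sum_eq_zero fun j _ => ?_
      simp [Fin.not_lt.mpr (Fin.le_last j)]
    rw [h1, zero_add]
    rw [Finset.sum_map]
    have h2 : ∀ i : Fin n, i ∈ J →
        (∑ j ∈ insert (Fin.last n) (J.map Fin.castSuccEmb),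
          if Fin.castSuccEmb i < j ∧ σp (Fin.castSuccEmb i) < σp j then 1 else 0)
        = 1 + ∑ j ∈ J, (if i < j ∧ σ i < σ j then 1 else 0) := by
      intro i _
      rw [Finset.sum_insert (hmem J)]
      congr 1
      · simp only [Fin.coe_castSuccEmb, hcast, hlast]
        simp [Fin.castSucc_lt_last]
      · rw [Finset.sum_map]
        refine Finset.sum_congr rfl fun j _ => ?_
        simp only [Fin.coe_castSuccEmb, hcast, Fin.castSucc_lt_castSucc_iff]
    rw [Finset.sum_congr rfl h2, Finset.sum_add_distrib]
    simp [hchi, add_comm]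
  have hbij : ∀ g : Finset (Fin (n + 1)) → ℤ,
      ∑ t ∈ ((Finset.univ : Finset (Fin n)).map Fin.castSuccEmb).powerset, g t =
      ∑ J ∈ (Finset.univ : Finset (Fin n)).powerset, g (J.map Fin.castSuccEmb) := by
    intro g
    refine (Finset.sum_bij (fun J _ => J.map Fin.castSuccEmb) ?_ ?_ ?_ ?_).symm
    · intro J hJ
      rw [Finset.mem_powerset] at *
      exact Finset.map_subset_map.mpr hJ
    · intro J₁ _ J₂ _ h
      exact Finset.map_injective _ h
    · intro t ht
      rw [Finset.mem_powerset] at ht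
      obtain ⟨u, -, hu⟩ := Finset.subset_map_iff.mp ht
      exact ⟨u, Finset.mem_powerset.mpr (Finset.subset_univ u), hu.symm⟩
    · intros; rfl
  have hsplit : ∀ g : Finset (Fin (n + 1)) → ℤ,
      ∑ I ∈ (Finset.univ : Finset (Fin (n + 1))).powerset, g I =
        ∑ J ∈ (Finset.univ : Finset (Fin n)).powerset, g (J.map Fin.castSuccEmb) +
        ∑ J ∈ (Finset.univ : Finset (Fin n)).powerset,
          g (insert (Fin.last n) (J.map Fin.castSuccEmb)) := by
    intro g
    have h1 : (Finset.univ : Finset (Fin (n + 1))) =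
        insert (Fin.last n) (Finset.univ.map Fin.castSuccEmb) := by
      rw [Fin.univ_castSuccEmb, Finset.cons_eq_insert]
    rw [h1, Finset.sum_powerset_insert (hmem _), hbij, hbij]
  have hcard : ∀ J : Finset (Fin n),
      (insert (Fin.last n) (J.map Fin.castSuccEmb)).card = J.card + 1 := by
    intro J
    rw [Finset.card_insert_of_notMem (hmem J), Finset.card_map]
  constructor
  · rw [arfBar, hsplit]
    rw [arfBar, arfA, sub_eq_add_neg, ← Finset.sum_neg_distrib]
    congr 1
    · refine Finset.sum_congr rfl fun J _ => ?_
      rw [hchimap, Finset.card_map]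
    · refine Finset.sum_congr rfl fun J _ => ?_
      rw [hchins, hcard]
      rw [show J.card + 1 + (chi σ J + J.card) = 2 * J.card + (chi σ J + 1) by ring]
      rw [pow_add, pow_mul, pow_succ]
      simp [mul_comm]
      ring
  · rw [arfA, hsplit]
    rw [arfBar, arfA]
    rw [add_comm (∑ I ∈ _, (-1:ℤ)^(I.card + chi σ I))]
    congr 1
    · refine Finset.sum_congr rfl fun J _ => ?_
      rw [hchimap]
    · refine Finset.sum_congr rfl fun J _ => ?_
      rw [hchins, add_comm]


end Rauzy
end

section
/- A permutation σ of {1,…,n} is irreducible if and only if there exists a finite word w in the operators L, R, L^{-1}, R^{-1} such that (wσ)(1) = 1; that is, a Rauzy class consists of irreducible permutations if and only if it contains a standard permutation. -/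
open Equiv

namespace Rauzy

/-! ### Auxiliary lemmas for the proof -/

section Aux

variable {n : ℕ}

lemma ic_val (a b : ℕ) (x : Fin n) :
    ((intervalCycle n a b) x).val =
      if a ≤ b ∧ b < n then
        (if a ≤ x.val ∧ x.val < b then x.val + 1 else if x.val = b then a else x.val)
      else x.val := by
  unfold intervalCycle
  split_ifs with h h1 h2 h1 <;> simp_all [Equiv.coe_fn_mk]

lemma ic_fix {a b : ℕ} {x : Fin n} (h : x.val < a ∨ (b < x.val ∧ x.val ≠ b) ∨ (¬ (a ≤ b ∧ b < n) )) :
    (intervalCycle n a b) x = x := by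
  apply Fin.ext
  rw [ic_val]
  have := x.isLt
  split_ifs <;> omega

/-- `Red k σ` : `σ` is "reducible at `k`" in pointwise form. -/
def Red (k : ℕ) (σ : Equiv.Perm (Fin n)) : Prop :=
  ∀ i : Fin n, i.val < k → n - k ≤ (σ i).val

lemma card_filter_lt (k : ℕ) (hk : k ≤ n) :
    ((Finset.univ : Finset (Fin n)).filter fun i : Fin n => i.val < k).card = k := by
  have : ((Finset.univ : Finset (Fin n)).filter fun i : Fin n => i.val < k) =
      Finset.attachFin (Finset.range k) (fun m hm => by
        simp only [Finset.mem_range] at hm; omega) := by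
    ext a
    simp [Finset.mem_attachFin]
  rw [this, Finset.card_attachFin, Finset.card_range]

lemma card_filter_ge (k : ℕ) (hk : k ≤ n) :
    ((Finset.univ : Finset (Fin n)).filter fun i : Fin n => n - k ≤ i.val).card = k := by
  have h1 := Finset.card_filter_add_card_filter_not
    (s := (Finset.univ : Finset (Fin n))) (p := fun i : Fin n => i.val < n - k)
  have h2 : ((Finset.univ : Finset (Fin n)).filter fun i : Fin n => i.val < n - k).card
      = n - k := card_filter_lt (n - k) (by omega)
  have h3 : ((Finset.univ : Finset (Fin n)).filter fun i : Fin n => ¬ i.val < n - k)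
      = (Finset.univ : Finset (Fin n)).filter fun i : Fin n => n - k ≤ i.val := by
    ext a; simp [not_lt]
  rw [h3, h2] at h1
  simp only [Finset.card_univ, Fintype.card_fin] at h1
  omega

lemma red_image {k : ℕ} {σ : Equiv.Perm (Fin n)} (h : Red k σ) (hk : k ≤ n) :
    Finset.image σ (Finset.univ.filter fun i : Fin n => i.val < k) =
      Finset.univ.filter fun i : Fin n => n - k ≤ i.val := by
  apply Finset.eq_of_subset_of_card_le
  · intro x hx
    simp only [Finset.mem_image, Finset.mem_filter, Finset.mem_univ, true_and] at hx ⊢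
    obtain ⟨i, hi, rfl⟩ := hx
    exact h i hi
  · rw [card_filter_ge k hk, Finset.card_image_of_injective _ σ.injective,
      card_filter_lt k hk]

lemma red_pos {k : ℕ} {σ : Equiv.Perm (Fin n)} (h : Red k σ) (hk : k ≤ n)
    {j : Fin n} (hj : n - k ≤ (σ j).val) : j.val < k := by
  have himg := red_image h hk
  have : σ j ∈ Finset.image σ (Finset.univ.filter fun i : Fin n => i.val < k) := by
    rw [himg]; simp only [Finset.mem_filter, Finset.mem_univ, true_and]; omega
  simp only [Finset.mem_image, Finset.mem_filter, Finset.mem_univ, true_and] at this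
  obtain ⟨i, hi, hij⟩ := this
  have := σ.injective hij
  subst this; exact hi

end Aux

section Aux1b
variable {n : ℕ}
lemma irred_iff {σ : Equiv.Perm (Fin n)} :
    Irreducible σ ↔ ∀ k, 0 < k → k < n → ¬ Red k σ := by
  constructor
  · intro h k hk0 hkn hred
    exact h k hk0 hkn (red_image hred (le_of_lt hkn))
  · intro h k hk0 hkn heq
    refine h k hk0 hkn ?_
    intro i hi
    have : σ i ∈ Finset.univ.filter fun i : Fin n => n - k ≤ i.val := by
      rw [← heq]
      exact Finset.mem_image_of_mem _ (by simp [hi])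
    simpa using this

end Aux1b

section Aux2

variable {n : ℕ}

lemma Lop_eq (hn : 0 < n) (σ : Equiv.Perm (Fin n)) :
    Lop σ = intervalCycle n ((σ ⟨0, hn⟩).val + 1) (n - 1) * σ := dif_pos hn

lemma Rop_eq (hn : 0 < n) (σ : Equiv.Perm (Fin n)) :
    Rop σ = σ * intervalCycle n 0 ((σ.symm ⟨n - 1, Nat.sub_lt hn Nat.one_pos⟩).val - 1) :=
  dif_pos hn

lemma Lop_apply (hn : 0 < n) (σ : Equiv.Perm (Fin n)) (i : Fin n) :
    Lop σ i = intervalCycle n ((σ ⟨0, hn⟩).val + 1) (n - 1) (σ i) := by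
  rw [Lop_eq hn]; rfl

lemma Rop_apply (hn : 0 < n) (σ : Equiv.Perm (Fin n)) (i : Fin n) :
    Rop σ i = σ (intervalCycle n 0 ((σ.symm ⟨n - 1, Nat.sub_lt hn Nat.one_pos⟩).val - 1) i) := by
  rw [Rop_eq hn]; rfl

lemma Lop_apply_zero (hn : 0 < n) (σ : Equiv.Perm (Fin n)) :
    Lop σ ⟨0, hn⟩ = σ ⟨0, hn⟩ := by
  rw [Lop_apply hn]
  apply ic_fix
  left; omega

lemma red_Lop_iff {σ : Equiv.Perm (Fin n)} {k : ℕ} (hk0 : 0 < k) (hkn : k < n) :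
    Red k (Lop σ) ↔ Red k σ := by
  have hn : 0 < n := by omega
  set c := (σ ⟨0, hn⟩).val with hc
  have hcn : c < n := (σ ⟨0, hn⟩).isLt
  constructor
  · intro h i hi
    have hc0 : n - k ≤ c := by
      have := h ⟨0, hn⟩ hk0
      rwa [Lop_apply_zero hn] at this
    have hLi := h i hi
    rw [Lop_apply hn] at hLi
    rw [ic_val] at hLi
    have := (σ i).isLt
    split_ifs at hLi <;> omega
  · intro h i hi
    have hc0 : n - k ≤ c := by
      have := h ⟨0, hn⟩ hk0
      exact this
    have hsi := h i hi
    rw [Lop_apply hn, ic_val]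
    have := (σ i).isLt
    split_ifs <;> omega

lemma red_Rop_iff {σ : Equiv.Perm (Fin n)} {k : ℕ} (hk0 : 0 < k) (hkn : k < n) :
    Red k (Rop σ) ↔ Red k σ := by
  have hn : 0 < n := by omega
  set m := (σ.symm ⟨n - 1, Nat.sub_lt hn Nat.one_pos⟩).val with hm
  have hmn : m < n := (σ.symm _).isLt
  set δ := intervalCycle n 0 (m - 1) with hδ
  have hσm : (σ ⟨m, hmn⟩).val = n - 1 := by
    have : σ (σ.symm ⟨n - 1, Nat.sub_lt hn Nat.one_pos⟩) = ⟨n - 1, Nat.sub_lt hn Nat.one_pos⟩ :=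
      σ.apply_symm_apply _
    rw [show (⟨m, hmn⟩ : Fin n) = σ.symm ⟨n - 1, Nat.sub_lt hn Nat.one_pos⟩ from Fin.ext rfl]
    rw [this]
  have hδm : δ ⟨m, hmn⟩ = ⟨m, hmn⟩ := by
    apply Fin.ext
    rw [hδ, ic_val]
    simp only [Fin.val_mk]
    split_ifs <;> omega
  have hδlt : ∀ x : Fin n, x.val < k → (δ x).val < k ∨ m ≥ k := by
    intro x hx
    by_cases hmk : m < k
    · left
      rw [hδ, ic_val]
      split_ifs <;> omega
    · right; omega
  constructor
  · intro h i hi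
    -- σ i = Rop σ (δ⁻¹ i)
    have hmk : m < k := by
      have : (Rop σ ⟨m, hmn⟩).val = n - 1 := by
        rw [Rop_apply hn, ← hm, ← hδ, hδm, hσm]
      refine red_pos h (le_of_lt hkn) (j := ⟨m, hmn⟩) ?_
      rw [this]; omega
    have hinv : (δ.symm i).val < k := by
      by_contra hge
      push_neg at hge
      have hfix : δ (δ.symm i) = δ.symm i := by
        apply ic_fix
        right; left
        constructor <;> omega
      rw [δ.apply_symm_apply] at hfix
      have := congrArg Fin.val hfix
      omega
    have := h (δ.symm i) hinv
    rw [Rop_apply hn, ← hm, ← hδ, δ.apply_symm_apply] at this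
    exact this
  · intro h i hi
    rw [Rop_apply hn, ← hm, ← hδ]
    have hmk : m < k := by
      refine red_pos h (le_of_lt hkn) (j := ⟨m, hmn⟩) ?_
      rw [hσm]; omega
    have : (δ i).val < k := by
      rcases hδlt i hi with h' | h'
      · exact h'
      · omega
    exact h (δ i) this

lemma irred_Lop_iff {σ : Equiv.Perm (Fin n)} : Irreducible (Lop σ) ↔ Irreducible σ := by
  rw [irred_iff, irred_iff]
  constructor <;> intro h k hk0 hkn <;> have := h k hk0 hkn <;>
    rw [red_Lop_iff hk0 hkn] at * <;> tauto

lemma irred_Rop_iff {σ : Equiv.Perm (Fin n)} : Irreducible (Rop σ) ↔ Irreducible σ := by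
  rw [irred_iff, irred_iff]
  constructor <;> intro h k hk0 hkn <;> have := h k hk0 hkn <;>
    rw [red_Rop_iff hk0 hkn] at * <;> tauto

lemma requiv_irred {σ τ : Equiv.Perm (Fin n)} (h : REquiv σ τ) :
    Irreducible σ ↔ Irreducible τ := by
  induction h with
  | rel x y hxy =>
    rcases hxy with rfl | rfl
    · exact irred_Lop_iff.symm
    · exact irred_Rop_iff.symm
  | refl x => rfl
  | symm x y _ ih => exact ih.symm
  | trans x y z _ _ ih1 ih2 => exact ih1.trans ih2

lemma std_irred (hn : 0 < n) {τ : Equiv.Perm (Fin n)} (hτ : (τ ⟨0, hn⟩).val = 0) :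
    Irreducible τ := by
  rw [irred_iff]
  intro k hk0 hkn hred
  have := hred ⟨0, hn⟩ hk0
  omega

end Aux2

section Aux3

variable {n : ℕ}

lemma requiv_rel_L {σ : Equiv.Perm (Fin n)} : REquiv σ (Lop σ) :=
  Relation.EqvGen.rel _ _ (Or.inl rfl)

lemma requiv_rel_R {σ : Equiv.Perm (Fin n)} : REquiv σ (Rop σ) :=
  Relation.EqvGen.rel _ _ (Or.inr rfl)

lemma Lstep (hn : 0 < n) (σ : Equiv.Perm (Fin n)) :
    Lop ((intervalCycle n ((σ ⟨0, hn⟩).val + 1) (n - 1))⁻¹ * σ) = σ := by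
  set γ := intervalCycle n ((σ ⟨0, hn⟩).val + 1) (n - 1) with hγ
  have h0 : (γ⁻¹ * σ) ⟨0, hn⟩ = σ ⟨0, hn⟩ := by
    rw [Equiv.Perm.mul_apply, Equiv.Perm.inv_def, Equiv.symm_apply_eq]
    exact (ic_fix (by left; omega)).symm
  rw [Lop_eq hn, h0, ← hγ, mul_inv_cancel_left]

lemma sweep_pow (hn : 0 < n) (σ : Equiv.Perm (Fin n)) (k : ℕ) :
    REquiv σ (((intervalCycle n ((σ ⟨0, hn⟩).val + 1) (n - 1))⁻¹)^k * σ) ∧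
      (((intervalCycle n ((σ ⟨0, hn⟩).val + 1) (n - 1))⁻¹)^k * σ) ⟨0, hn⟩ = σ ⟨0, hn⟩ := by
  set γ := intervalCycle n ((σ ⟨0, hn⟩).val + 1) (n - 1) with hγ
  induction k with
  | zero => rw [pow_zero, one_mul]; exact ⟨Relation.EqvGen.refl σ, rfl⟩
  | succ k ih =>
    obtain ⟨ih1, ih2⟩ := ih
    have hfirst : ((γ⁻¹)^(k+1) * σ) ⟨0, hn⟩ = σ ⟨0, hn⟩ := by
      rw [pow_succ', mul_assoc, Equiv.Perm.mul_apply, ih2, Equiv.Perm.inv_def,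
        Equiv.symm_apply_eq]
      exact (ic_fix (by left; omega)).symm
    refine ⟨?_, hfirst⟩
    have hstep : Lop ((γ⁻¹)^(k+1) * σ) = (γ⁻¹)^k * σ := by
      have := Lstep hn ((γ⁻¹)^k * σ)
      rw [ih2, ← hγ] at this
      rw [← this]
      congr 1
      rw [pow_succ', mul_assoc]
    exact Relation.EqvGen.trans _ _ _ ih1
      (Relation.EqvGen.symm _ _ (hstep ▸ requiv_rel_L))

lemma gpow_fix {c : ℕ} {x : Fin n} (hx : x.val ≤ c) (j : ℕ) :
    ((intervalCycle n (c + 1) (n - 1))^j) x = x := by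
  induction j with
  | zero => rfl
  | succ j ih =>
    rw [pow_succ, Equiv.Perm.mul_apply, ic_fix (by left; omega), ih]

lemma gpow_top (hn : 2 ≤ n) {c : ℕ} :
    ∀ j (hj1 : 1 ≤ j) (hj2 : c + j ≤ n - 2),
      ((intervalCycle n (c + 1) (n - 1))^j) ⟨n - 1, by omega⟩ = ⟨c + j, by omega⟩ := by
  intro j
  induction j with
  | zero => omega
  | succ j ih =>
    intro _ hcj
    rcases Nat.eq_zero_or_pos j with rfl | hj
    · rw [pow_one]
      apply Fin.ext
      rw [ic_val]
      simp only [Fin.val_mk]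
      split_ifs <;> omega
    · rw [pow_succ', Equiv.Perm.mul_apply, ih hj (by omega)]
      apply Fin.ext
      rw [ic_val]
      simp only [Fin.val_mk]
      split_ifs <;> omega

lemma sweep (hn : 0 < n) (σ : Equiv.Perm (Fin n)) (v : Fin n)
    (hv : (σ ⟨0, hn⟩).val < v.val) :
    ∃ τ : Equiv.Perm (Fin n), REquiv σ τ ∧
      τ.symm ⟨n - 1, Nat.sub_lt hn Nat.one_pos⟩ = σ.symm v ∧
      (∀ x : Fin n, x.val ≤ (σ ⟨0, hn⟩).val → τ.symm x = σ.symm x) ∧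
      τ ⟨0, hn⟩ = σ ⟨0, hn⟩ := by
  set c := (σ ⟨0, hn⟩).val with hc
  by_cases hv1 : v.val = n - 1
  · refine ⟨σ, Relation.EqvGen.refl σ, ?_, fun x _ => rfl, rfl⟩
    congr 1
    exact Fin.ext hv1.symm
  · have hvn : v.val ≤ n - 2 := by have := v.isLt; omega
    have hn2 : 2 ≤ n := by omega
    set γ := intervalCycle n (c + 1) (n - 1) with hγ
    set k := v.val - c with hk
    refine ⟨(γ⁻¹)^k * σ, (sweep_pow hn σ k).1, ?_, ?_, (sweep_pow hn σ k).2⟩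
    · have hsymm : ∀ x : Fin n, ((γ⁻¹)^k * σ).symm x = σ.symm ((γ^k) x) := by
        intro x
        have : ((γ⁻¹)^k * σ).symm x = ((γ⁻¹)^k * σ)⁻¹ x := rfl
        rw [this, mul_inv_rev, inv_pow, inv_inv, Equiv.Perm.mul_apply]
        rfl
      rw [hsymm]
      congr 1
      have := gpow_top hn2 (c := c) k (by omega) (by omega)
      rw [hγ]
      rw [show (⟨n - 1, Nat.sub_lt hn Nat.one_pos⟩ : Fin n) = ⟨n - 1, by omega⟩ from rfl, this]
      exact Fin.ext (by simp; omega)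
    · intro x hx
      have hsymm : ((γ⁻¹)^k * σ).symm x = σ.symm ((γ^k) x) := by
        have : ((γ⁻¹)^k * σ).symm x = ((γ⁻¹)^k * σ)⁻¹ x := rfl
        rw [this, mul_inv_rev, inv_pow, inv_inv, Equiv.Perm.mul_apply]
        rfl
      rw [hsymm, gpow_fix hx]

lemma Rop_symm_apply (hn : 0 < n) (σ : Equiv.Perm (Fin n)) (x : Fin n) :
    (Rop σ).symm x =
      (intervalCycle n 0 ((σ.symm ⟨n - 1, Nat.sub_lt hn Nat.one_pos⟩).val - 1)).symm
        (σ.symm x) := by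
  rw [Rop_eq hn]; rfl

lemma ic0_fix {M : ℕ} {x : Fin n} (hx : M ≤ x.val) : intervalCycle n 0 (M - 1) x = x := by
  apply Fin.ext
  rw [ic_val]
  have := x.isLt
  split_ifs <;> omega

lemma ic0_symm_fix {M : ℕ} {x : Fin n} (hx : M ≤ x.val) :
    (intervalCycle n 0 (M - 1)).symm x = x := by
  rw [Equiv.symm_apply_eq]
  exact (ic0_fix hx).symm

lemma rrun (hn : 0 < n) :
    ∀ p, ∀ σ : Equiv.Perm (Fin n), (σ.symm ⟨0, hn⟩).val = p →
      p < (σ.symm ⟨n - 1, Nat.sub_lt hn Nat.one_pos⟩).val →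
      ∃ τ, REquiv σ τ ∧ (τ ⟨0, hn⟩).val = 0 := by
  intro p
  induction p with
  | zero =>
    intro σ h0 _
    refine ⟨σ, Relation.EqvGen.refl σ, ?_⟩
    have h1 : σ.symm ⟨0, hn⟩ = ⟨0, hn⟩ := Fin.ext h0
    rw [← h1, σ.apply_symm_apply]
  | succ p ih =>
    intro σ h0 hpm
    set M := (σ.symm ⟨n - 1, Nat.sub_lt hn Nat.one_pos⟩).val with hM
    have hMn : M < n := (σ.symm _).isLt
    set δ := intervalCycle n 0 (M - 1) with hδ
    have hp1n : p + 1 < n := by omega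
    have hsymm0 : σ.symm ⟨0, hn⟩ = ⟨p + 1, hp1n⟩ := Fin.ext h0
    have hδp : δ ⟨p, by omega⟩ = ⟨p + 1, hp1n⟩ := by
      apply Fin.ext
      rw [hδ, ic_val]
      simp only [Fin.val_mk]
      split_ifs <;> omega
    have h1 : ((Rop σ).symm ⟨0, hn⟩).val = p := by
      rw [Rop_symm_apply hn, hsymm0, ← hδ, ← hδp, Equiv.symm_apply_apply]
    have h2 : ((Rop σ).symm ⟨n - 1, Nat.sub_lt hn Nat.one_pos⟩).val = M := by
      rw [Rop_symm_apply hn, ← hδ]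
      have : σ.symm ⟨n - 1, Nat.sub_lt hn Nat.one_pos⟩ = ⟨M, hMn⟩ := Fin.ext rfl
      rw [this, hδ, ic0_symm_fix (le_refl M)]
    obtain ⟨τ, hτ, hτ0⟩ := ih (Rop σ) h1 (by omega)
    exact ⟨τ, Relation.EqvGen.trans _ _ _ requiv_rel_R hτ, hτ0⟩

lemma rot_pows (hn : 0 < n) (σ : Equiv.Perm (Fin n)) :
    ∀ j, REquiv σ (σ * (intervalCycle n 0
        ((σ.symm ⟨n - 1, Nat.sub_lt hn Nat.one_pos⟩).val - 1))^j) ∧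
      (σ * (intervalCycle n 0
        ((σ.symm ⟨n - 1, Nat.sub_lt hn Nat.one_pos⟩).val - 1))^j).symm
          ⟨n - 1, Nat.sub_lt hn Nat.one_pos⟩
        = σ.symm ⟨n - 1, Nat.sub_lt hn Nat.one_pos⟩ := by
  set M := (σ.symm ⟨n - 1, Nat.sub_lt hn Nat.one_pos⟩).val with hM
  have hMn : M < n := (σ.symm _).isLt
  set δ := intervalCycle n 0 (M - 1) with hδ
  have hsymmM : σ.symm ⟨n - 1, Nat.sub_lt hn Nat.one_pos⟩ = ⟨M, hMn⟩ := Fin.ext rfl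
  have hpowsymm : ∀ j x, ((σ * δ^j).symm) x = (δ^j).symm (σ.symm x) := fun j x => rfl
  have hfix : ∀ j, (δ^j).symm (⟨M, hMn⟩ : Fin n) = ⟨M, hMn⟩ := by
    intro j
    rw [Equiv.symm_apply_eq]
    induction j with
    | zero => rfl
    | succ j ihj =>
      rw [pow_succ, Equiv.Perm.mul_apply]
      have hδM : δ ⟨M, hMn⟩ = ⟨M, hMn⟩ := ic0_fix (le_refl M)
      rw [hδM]
      exact ihj
  intro j
  induction j with
  | zero =>
    rw [pow_zero, mul_one]
    exact ⟨Relation.EqvGen.refl σ, rfl⟩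
  | succ j ih =>
    obtain ⟨ih1, ih2⟩ := ih
    have hsymmj : (σ * δ^j).symm ⟨n - 1, Nat.sub_lt hn Nat.one_pos⟩ = ⟨M, hMn⟩ := by
      rw [ih2, hsymmM]
    have hstep : Rop (σ * δ^j) = σ * δ^(j+1) := by
      rw [Rop_eq hn, hsymmj]
      simp only [Fin.val_mk]
      rw [← hδ, mul_assoc, ← pow_succ]
    refine ⟨Relation.EqvGen.trans _ _ _ ih1 (hstep ▸ requiv_rel_R), ?_⟩
    rw [hpowsymm, hsymmM, hfix]

lemma rot_pow_zero (hn : 0 < n) {M : ℕ} (hMn : M < n) :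
    ∀ j (hj : j < M), ((intervalCycle n 0 (M - 1))^j) ⟨0, hn⟩ = ⟨j, by omega⟩ := by
  intro j
  induction j with
  | zero => intro _; rfl
  | succ j ih =>
    intro hj
    rw [pow_succ', Equiv.Perm.mul_apply, ih (by omega)]
    apply Fin.ext
    rw [ic_val]
    simp only [Fin.val_mk]
    split_ifs <;> omega

lemma rot_reach (hn : 0 < n) (σ : Equiv.Perm (Fin n)) (q : ℕ)
    (hq : q < (σ.symm ⟨n - 1, Nat.sub_lt hn Nat.one_pos⟩).val) :
    ∃ τ, REquiv σ τ ∧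
      τ ⟨0, hn⟩ = σ ⟨q, lt_trans hq (σ.symm _).isLt⟩ := by
  set M := (σ.symm ⟨n - 1, Nat.sub_lt hn Nat.one_pos⟩).val with hM
  have hMn : M < n := (σ.symm _).isLt
  refine ⟨σ * (intervalCycle n 0 (M - 1))^q, (rot_pows hn σ q).1, ?_⟩
  rw [Equiv.Perm.mul_apply, rot_pow_zero hn hMn q hq]

lemma reach_std (hn : 0 < n) :
    ∀ c, ∀ σ : Equiv.Perm (Fin n), Irreducible σ → (σ ⟨0, hn⟩).val = c →
      ∃ τ, REquiv σ τ ∧ (τ ⟨0, hn⟩).val = 0 := by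
  intro c
  induction c using Nat.strong_induction_on with
  | _ c IH =>
  intro σ hirr hc
  rcases Nat.eq_zero_or_pos c with rfl | hc1
  · exact ⟨σ, Relation.EqvGen.refl σ, hc⟩
  have hcn : c < n := hc ▸ (σ ⟨0, hn⟩).isLt
  have hn2 : 2 ≤ n := by omega
  set p := (σ.symm ⟨0, hn⟩).val with hp
  have hpn : p < n := (σ.symm _).isLt
  set m := (σ.symm ⟨n - 1, Nat.sub_lt hn Nat.one_pos⟩).val with hm
  have hmn : m < n := (σ.symm _).isLt
  have happ0 : σ ⟨p, hpn⟩ = ⟨0, hn⟩ := by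
    rw [show (⟨p, hpn⟩ : Fin n) = σ.symm ⟨0, hn⟩ from Fin.ext rfl, σ.apply_symm_apply]
  have happm : σ ⟨m, hmn⟩ = ⟨n - 1, Nat.sub_lt hn Nat.one_pos⟩ := by
    rw [show (⟨m, hmn⟩ : Fin n) = σ.symm ⟨n - 1, Nat.sub_lt hn Nat.one_pos⟩ from Fin.ext rfl,
      σ.apply_symm_apply]
  have hp0 : 0 < p := by
    rcases Nat.eq_zero_or_pos p with hz | h
    · exfalso
      have h1 : (⟨p, hpn⟩ : Fin n) = ⟨0, hn⟩ := Fin.ext hz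
      rw [h1] at happ0
      rw [happ0] at hc
      simp at hc
      omega
    · exact h
  have hpm : p ≠ m := by
    intro h
    have h1 : (⟨p, hpn⟩ : Fin n) = ⟨m, hmn⟩ := Fin.ext h
    rw [h1, happm] at happ0
    have := congrArg Fin.val happ0
    simp at this
    omega
  have hcn1 : c < n - 1 := by
    by_contra hge
    push_neg at hge
    have hred : Red 1 σ := by
      intro i hi
      have h1 : i = ⟨0, hn⟩ := Fin.ext (by simp only [Fin.val_mk]; omega)
      rw [h1, hc]
      omega
    exact (irred_iff.mp hirr 1 one_pos (by omega)) hred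
  by_cases hplt : p < m
  · exact rrun hn p σ hp.symm hplt
  · have hmp : m < p := by omega
    by_cases hbig : ∃ v : Fin n, c < v.val ∧ p < (σ.symm v).val
    · obtain ⟨v, hv1, hv2⟩ := hbig
      obtain ⟨τ₁, ht1, ht2, ht3, ht4⟩ := sweep hn σ v (by omega)
      have hps : (τ₁.symm ⟨0, hn⟩).val = p := by
        rw [ht3 ⟨0, hn⟩ (by simp)]
      have hms : p < (τ₁.symm ⟨n - 1, Nat.sub_lt hn Nat.one_pos⟩).val := by
        rw [ht2]; exact hv2
      obtain ⟨τ, h1, h2⟩ := rrun hn p τ₁ hps hms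
      exact ⟨τ, Relation.EqvGen.trans _ _ _ ht1 h1, h2⟩
    · push_neg at hbig
      have hqr : ∃ q r : Fin n, q.val < r.val ∧ c < (σ r).val ∧
          0 < (σ q).val ∧ (σ q).val < c := by
        by_contra hno
        push_neg at hno
        set S := Finset.univ.filter (fun r : Fin n => c < (σ r).val) with hS
        have hSne : S.Nonempty := by
          refine ⟨σ.symm ⟨n - 1, Nat.sub_lt hn Nat.one_pos⟩, ?_⟩
          rw [hS]
          simp only [Finset.mem_filter, Finset.mem_univ, true_and]
          rw [σ.apply_symm_apply]
          simp
          omega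
        set r0 := S.max' hSne with hr0
        have hr0S : r0 ∈ S := S.max'_mem hSne
        have hr0c : c < (σ r0).val := by
          rw [hS] at hr0S
          simpa using hr0S
        have hr0p : r0.val < p := by
          have h1 : (σ.symm (σ r0)).val ≤ p := hbig (σ r0) hr0c
          rw [σ.symm_apply_apply] at h1
          have h2 : r0.val ≠ p := by
            intro h
            have h3 : r0 = ⟨p, hpn⟩ := Fin.ext h
            rw [h3, happ0] at hr0c
            simp at hr0c
          omega
        set K := r0.val + 1 with hK
        have hlow : ∀ i : Fin n, i.val < K → c ≤ (σ i).val := by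
          intro i hi
          rcases Nat.lt_or_ge i.val r0.val with hlt | hge
          · have h2 := hno i r0 hlt hr0c
            by_cases hz : (σ i).val = 0
            · exfalso
              have h3 : σ i = ⟨0, hn⟩ := Fin.ext hz
              have h4 : i = σ.symm ⟨0, hn⟩ := by rw [← h3, σ.symm_apply_apply]
              have h5 : i.val = p := by rw [h4]
              omega
            · have := h2 (by omega)
              omega
          · have h3 : i = r0 := Fin.ext (by omega)
            rw [h3]
            omega
        have hcard : n - c ≤ K := by
          have hsub : Finset.image σ.symm
              (Finset.univ.filter fun v : Fin n => n - (n - c) ≤ v.val) ⊆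
              Finset.univ.filter (fun i : Fin n => i.val < K) := by
            intro x hx
            simp only [Finset.mem_image, Finset.mem_filter, Finset.mem_univ, true_and] at hx ⊢
            obtain ⟨v, hv, rfl⟩ := hx
            have hvc : c ≤ v.val := by omega
            rcases Nat.eq_or_lt_of_le hvc with heq | hlt
            · have h1 : σ ⟨0, hn⟩ = v := Fin.ext (by omega)
              rw [← h1, σ.symm_apply_apply]
              simp only [Fin.val_mk]
              omega
            · have h2 : σ.symm v ∈ S := by
                rw [hS]
                simp only [Finset.mem_filter, Finset.mem_univ, true_and]
                rw [σ.apply_symm_apply]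
                exact hlt
              have := S.le_max' (σ.symm v) h2
              have := Fin.le_iff_val_le_val.mp this
              omega
          have h1 := Finset.card_le_card hsub
          rw [Finset.card_image_of_injective _ σ.symm.injective,
            card_filter_ge (n - c) (by omega), card_filter_lt K (by omega)] at h1
          omega
        have hred : Red K σ := by
          intro i hi
          have := hlow i hi
          omega
        exact (irred_iff.mp hirr K (by omega) (by omega)) hred
      obtain ⟨q, r, hqr1, hrc, hq0, hqc⟩ := hqr
      obtain ⟨τ₁, ht1, ht2, ht3, ht4⟩ := sweep hn σ (σ r) (by omega)
      have hm1 : (τ₁.symm ⟨n - 1, Nat.sub_lt hn Nat.one_pos⟩).val = r.val := by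
        rw [ht2, σ.symm_apply_apply]
      obtain ⟨τ₂, ht5, ht6⟩ := rot_reach hn τ₁ q.val (by omega)
      have hτ1q : τ₁ q = σ q := by
        have hfix := ht3 (σ q) (by omega)
        rw [σ.symm_apply_apply] at hfix
        calc τ₁ q = τ₁ (τ₁.symm (σ q)) := by rw [hfix]
        _ = σ q := τ₁.apply_symm_apply _
      have hτ20 : (τ₂ ⟨0, hn⟩).val = (σ q).val := by
        rw [ht6, show (⟨q.val, _⟩ : Fin n) = q from Fin.ext rfl, hτ1q]
      have hequiv2 : REquiv σ τ₂ := Relation.EqvGen.trans _ _ _ ht1 ht5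
      have hirr2 : Irreducible τ₂ := (requiv_irred hequiv2).mp hirr
      obtain ⟨τ, h1, h2⟩ := IH (σ q).val (by omega) τ₂ hirr2 hτ20
      exact ⟨τ, Relation.EqvGen.trans _ _ _ hequiv2 h1, h2⟩

end Aux3

/-- A permutation is irreducible if and only if its Rauzy class contains a standard
permutation (one with `σ(1) = 1`, 1-indexed). -/
theorem irreducible_iff_standard_in_class (n : ℕ) (hn : 1 ≤ n)
    (σ : Equiv.Perm (Fin n)) :
    Irreducible σ ↔ ∃ τ : Equiv.Perm (Fin n), REquiv σ τ ∧ (τ ⟨0, hn⟩).val = 0 := by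
  constructor
  · intro hirr
    exact reach_std hn ((σ ⟨0, hn⟩).val) σ hirr rfl
  · rintro ⟨τ, hequiv, hτ⟩
    exact (requiv_irred hequiv).mpr (std_irred hn hτ)

end Rauzy
end
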